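/- arXiv:1703.04867 — 3 statements merged into one kernel-verified Lean document; each statement's English description precedes it below -/
import Mathlib

section
/- For a prime integer p ≥ 3, the number of toroidal knot (p,p)-mosaics satisfies D_T^{(p,p)} = (1/p²)·d_{p²} + (2/p)·Σ_{k=0}^{(p−1)/2} d_{p_{(k,1)}} + 7. -/
/-- Connection point on the left edge, for each of the eleven mosaic tiles `T_0, …, T_10`. -/
def cpL : Fin 11 → Bool := ![false, true, false, false, true, true, false, true, true, true, true]
/-- Connection point on the right edge. -/
def cpR : Fin 11 → Bool := ![false, false, true, true, false, true, false, true, true, true, true]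
/-- Connection point on the top edge. -/
def cpT : Fin 11 → Bool := ![false, false, false, true, true, false, true, true, true, true, true]
/-- Connection point on the bottom edge. -/
def cpB : Fin 11 → Bool := ![false, true, true, false, false, false, true, true, true, true, true]

/-- An `(m,n)`-mosaic: an `m × n` matrix of mosaic tiles (row `i`, column `j`). -/
abbrev Mosaic (m n : ℕ) := Fin m → Fin n → Fin 11

/-- Suitably connected: contiguous tiles agree about connection points on their common edge. -/
def SuitablyConnected {m n : ℕ} (M : Mosaic m n) : Prop :=
  (∀ (i : Fin m) (j : Fin n) (h : j.val + 1 < n),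
      cpR (M i j) = cpL (M i ⟨j.val + 1, h⟩)) ∧
  (∀ (i : Fin m) (h : i.val + 1 < m) (j : Fin n),
      cpB (M i j) = cpT (M ⟨i.val + 1, h⟩ j))

/-- Suitably ∂-connected: tiles on opposite ends of a row (resp. column) agree about
connection points on the outer boundary edges. -/
def SuitablyBdryConnected {m n : ℕ} (M : Mosaic m n) : Prop :=
  (∀ (i : Fin m) (j j' : Fin n), j.val = 0 → j'.val = n - 1 →
      cpL (M i j) = cpR (M i j')) ∧
  (∀ (i i' : Fin m) (j : Fin n), i.val = 0 → i'.val = m - 1 →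
      cpT (M i j) = cpB (M i' j))

/-- A period knot `(m,n)`-mosaic. -/
def PeriodKnot {m n : ℕ} (M : Mosaic m n) : Prop :=
  SuitablyConnected M ∧ SuitablyBdryConnected M

/-- `D_P^{(m,n)}`, the number of period knot `(m,n)`-mosaics. -/
noncomputable def DP (m n : ℕ) : ℕ := Nat.card {M : Mosaic m n // PeriodKnot M}

/-- No connection points on the boundary of the mosaic. -/
def BoundaryFree {m n : ℕ} (M : Mosaic m n) : Prop :=
  ∀ (i : Fin m) (j : Fin n),
    (j.val = 0 → cpL (M i j) = false) ∧ (j.val = n - 1 → cpR (M i j) = false) ∧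
    (i.val = 0 → cpT (M i j) = false) ∧ (i.val = m - 1 → cpB (M i j) = false)

/-- `D^{(m,n)}`, the number of knot `(m,n)`-mosaics. -/
noncomputable def DK (m n : ℕ) : ℕ :=
  Nat.card {M : Mosaic m n // SuitablyConnected M ∧ BoundaryFree M}

/-- Subtract `x` from the index `i`, modulo `m`. -/
def shiftIdx {m : ℕ} (x : ℤ) (i : Fin m) : Fin m :=
  ⟨(((i : ℤ) - x) % (m : ℤ)).toNat, by
    have hm : (0 : ℤ) < (m : ℤ) := by exact_mod_cast i.pos
    have h1 := Int.emod_lt_of_pos ((i : ℤ) - x) hm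
    have h2 := Int.emod_nonneg ((i : ℤ) - x) (by omega : (m : ℤ) ≠ 0)
    omega⟩

/-- The cyclic rotation `t_{x,y}`: `(t_{x,y} M)_{i,j} = M_{i-x, j-y}` (indices mod `m`, `n`). -/
def tshift {m n : ℕ} (x y : ℤ) (M : Mosaic m n) : Mosaic m n :=
  fun i j => M (shiftIdx x i) (shiftIdx y j)

/-- `M` is a `(p,q)`-f.period mosaic: `p` is the least positive integer with `M = t_{p,0}(M)`
and `q` is the least positive integer with `M = t_{0,q}(M)`. -/
def IsFPeriod {m n : ℕ} (p q : ℕ) (M : Mosaic m n) : Prop :=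
  IsLeast {a : ℕ | 0 < a ∧ M = tshift (a : ℤ) 0 M} p ∧
  IsLeast {b : ℕ | 0 < b ∧ M = tshift 0 (b : ℤ) M} q

/-- `d_{p,q}`: the number of `(p,q)`-f.period knot `(m,n)`-mosaics. -/
noncomputable def dFP (m n p q : ℕ) : ℕ :=
  Nat.card {M : Mosaic m n // PeriodKnot M ∧ IsFPeriod p q M}

/-- Equivalence of period knot mosaics under cyclic rotations of rows and columns. -/
def torRel (m n : ℕ) (A B : {M : Mosaic m n // PeriodKnot M}) : Prop :=
  ∃ x y : ℤ, tshift x y A.val = B.val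

/-- `D_T^{(m,n)}`, the number of toroidal knot `(m,n)`-mosaics. -/
noncomputable def DT (m n : ℕ) : ℕ := Nat.card (Quot (torRel m n))

/-- `M` is a `p_{(k,1)}`-f.period knot `(p,p)`-mosaic: not `(1,1)`-f.period and `M = t_{k,1}(M)`. -/
def IsPk1FPeriod {p : ℕ} (k : ℕ) (M : Mosaic p p) : Prop :=
  ¬ IsFPeriod 1 1 M ∧ M = tshift (k : ℤ) 1 M

/-- `d_{p_{(k,1)}}`: the number of `p_{(k,1)}`-f.period knot `(p,p)`-mosaics. -/
noncomputable def dPk (p k : ℕ) : ℕ :=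
  Nat.card {M : Mosaic p p // PeriodKnot M ∧ IsPk1FPeriod k M}

/-- `d_{p²}`: the number of period knot `(p,p)`-mosaics that are not `(1,1)`-, not `(1,p)`-
and not `p_{(k,1)}`-f.period for any `k`. -/
noncomputable def dPsq (p : ℕ) : ℕ :=
  Nat.card {M : Mosaic p p // PeriodKnot M ∧ ¬ IsFPeriod 1 1 M ∧ ¬ IsFPeriod 1 p M ∧
    ∀ k < p, ¬ IsPk1FPeriod k M}

/-- Entries of the pair `(X_k, O_k)` of `2^k × 2^k` matrices defined by the block recursion
`X_{k+1} = [[X_k, O_k], [O_k, X_k]]`, `O_{k+1} = [[O_k, X_k], [X_k, 4 O_k]]`,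
seeded with `X_0 = O_0 = [1]` (the most significant bit selects the block). -/
def matsXO : ℕ → ℕ → ℕ → ℕ × ℕ
  | 0, _, _ => (1, 1)
  | k + 1, i, j =>
    let v := matsXO k (i % 2 ^ k) (j % 2 ^ k)
    if i / 2 ^ k % 2 = 0 then
      if j / 2 ^ k % 2 = 0 then (v.1, v.2) else (v.2, v.1)
    else
      if j / 2 ^ k % 2 = 0 then (v.2, v.1) else (v.1, 4 * v.2)

/-- The matrix `X_k`. -/
def Xmat (m : ℕ) : Matrix (Fin (2 ^ m)) (Fin (2 ^ m)) ℕ :=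
  Matrix.of fun i j => (matsXO m i j).1

/-- The matrix `O_k`. -/
def Omat (m : ℕ) : Matrix (Fin (2 ^ m)) (Fin (2 ^ m)) ℕ :=
  Matrix.of fun i j => (matsXO m i j).2

/-- Entries of the quadruple `(X_k^+, X_k^-, O_k^+, O_k^-)` of `2^k × 2^k` matrices defined by
the block recursions `X_{k+1}^+ = [[X_k^+, O_k^-],[O_k^-, X_k^+]]`,
`X_{k+1}^- = [[X_k^-, O_k^+],[O_k^+, X_k^-]]`, `O_{k+1}^+ = [[O_k^+, X_k^-],[X_k^-, 4 O_k^+]]`,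
`O_{k+1}^- = [[O_k^-, X_k^+],[X_k^+, 4 O_k^-]]`, seeded with `X_0^+ = O_0^+ = [1]`,
`X_0^- = O_0^- = [0]` (the most significant bit selects the block). -/
def matsPM : ℕ → ℕ → ℕ → ℕ × ℕ × ℕ × ℕ
  | 0, _, _ => (1, 0, 1, 0)
  | k + 1, i, j =>
    let v := matsPM k (i % 2 ^ k) (j % 2 ^ k)
    match v with
    | (xp, xm, op, om) =>
      if i / 2 ^ k % 2 = 0 then
        if j / 2 ^ k % 2 = 0 then (xp, xm, op, om) else (om, op, xm, xp)
      else
        if j / 2 ^ k % 2 = 0 then (om, op, xm, xp) else (xp, xm, 4 * op, 4 * om)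

/-- The matrix `X_m^+`. -/
def Xplus (m : ℕ) : Matrix (Fin (2 ^ m)) (Fin (2 ^ m)) ℕ :=
  Matrix.of fun i j => (matsPM m i j).1
/-- The matrix `X_m^-`. -/
def Xminus (m : ℕ) : Matrix (Fin (2 ^ m)) (Fin (2 ^ m)) ℕ :=
  Matrix.of fun i j => (matsPM m i j).2.1
/-- The matrix `O_m^+`. -/
def Oplus (m : ℕ) : Matrix (Fin (2 ^ m)) (Fin (2 ^ m)) ℕ :=
  Matrix.of fun i j => (matsPM m i j).2.2.1
/-- The matrix `O_m^-`. -/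
def Ominus (m : ℕ) : Matrix (Fin (2 ^ m)) (Fin (2 ^ m)) ℕ :=
  Matrix.of fun i j => (matsPM m i j).2.2.2

/-- The boundary state (a word in `{o,x}^m`) encoded by `a : Fin (2^m)` in reverse
lexicographic order: the first position is the least significant bit. -/
def stateOf {m : ℕ} (a : Fin (2 ^ m)) : Fin m → Bool := fun r => (a : ℕ).testBit r.val

/-- The `l`-state of a mosaic. -/
def lState {m n : ℕ} (hn : 0 < n) (M : Mosaic m n) : Fin m → Bool :=
  fun i => cpL (M i ⟨0, hn⟩)
/-- The `r`-state of a mosaic. -/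
def rState {m n : ℕ} (hn : 0 < n) (M : Mosaic m n) : Fin m → Bool :=
  fun i => cpR (M i ⟨n - 1, Nat.sub_lt hn Nat.one_pos⟩)
/-- The `t`-state of a mosaic. -/
def tState {m n : ℕ} (hm : 0 < m) (M : Mosaic m n) : Fin n → Bool :=
  fun j => cpT (M ⟨0, hm⟩ j)
/-- The `b`-state of a mosaic. -/
def bState {m n : ℕ} (hm : 0 < m) (M : Mosaic m n) : Fin n → Bool :=
  fun j => cpB (M ⟨m - 1, Nat.sub_lt hm Nat.one_pos⟩ j)

/-- The state matrix `N^{(m,n)+}`: its `(a,b)` entry counts the suitably connected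
`(m,n)`-mosaics whose `t`-state equals its `b`-state, whose `l`-state is the `a`-th state
and whose `r`-state is the `b`-th state. -/
noncomputable def Nplus (m n : ℕ) (hm : 0 < m) (hn : 0 < n) :
    Matrix (Fin (2 ^ m)) (Fin (2 ^ m)) ℕ :=
  Matrix.of fun a b => Nat.card {M : Mosaic m n // SuitablyConnected M ∧
    tState hm M = bState hm M ∧ lState hn M = stateOf a ∧ rState hn M = stateOf b}

/-- The index map `α` for `tr^{(k)}`: cyclic shift by `k` positions of the `p`-bit binary
representation, i.e. `α(i) ≡ 2^k i (mod 2^p - 1)` for `0 < i < 2^p - 1`, `α(0) = 0`,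
`α(2^p-1) = 2^p-1`. -/
def alphaIdx (p k : ℕ) (i : Fin (2 ^ p)) : Fin (2 ^ p) :=
  if h : (i : ℕ) = 2 ^ p - 1 then i
  else ⟨(2 ^ k * (i : ℕ)) % (2 ^ p - 1), by
    have h1 : 0 < 2 ^ p := Nat.two_pow_pos p
    have h2 : (i : ℕ) < 2 ^ p := i.isLt
    have h3 : 0 < 2 ^ p - 1 := by omega
    have h4 := Nat.mod_lt (2 ^ k * (i : ℕ)) h3
    omega⟩

/-- The twisted trace `tr^{(k)}(A) = Σ_i A_{i+1, α(i)+1}`. -/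
def trk (p k : ℕ) (A : Matrix (Fin (2 ^ p)) (Fin (2 ^ p)) ℕ) : ℕ :=
  ∑ i, A i (alphaIdx p k i)

/-! ### Auxiliary material -/

section Aux

lemma shiftIdx_val {m : ℕ} (x : ℤ) (i : Fin m) :
    ((shiftIdx x i).val : ℤ) = ((i : ℤ) - x) % (m : ℤ) := by
  have hm : (0 : ℤ) < (m : ℤ) := by exact_mod_cast i.pos
  simp only [shiftIdx]
  rw [Int.toNat_of_nonneg (Int.emod_nonneg _ (by omega))]

lemma shiftIdx_congr {m : ℕ} {x x' : ℤ} (h : x % m = x' % m) (i : Fin m) :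
    shiftIdx x i = shiftIdx x' i := by
  apply Fin.ext
  have h1 := shiftIdx_val x i
  have h2 := shiftIdx_val x' i
  have h3 : ((i : ℤ) - x) % m = ((i : ℤ) - x') % m := by
    rw [Int.sub_emod, h, ← Int.sub_emod]
  omega

lemma shiftIdx_add {m : ℕ} (x y : ℤ) (i : Fin m) :
    shiftIdx x (shiftIdx y i) = shiftIdx (x + y) i := by
  apply Fin.ext
  have h1 := shiftIdx_val x (shiftIdx y i)
  have h2 := shiftIdx_val y i
  have h3 := shiftIdx_val (x + y) i
  have h4 : (((shiftIdx y i).val : ℤ) - x) % m = ((i : ℤ) - (x + y)) % m := by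
    rw [h2, Int.sub_emod, Int.emod_emod_of_dvd _ dvd_rfl, ← Int.sub_emod]
    ring_nf
  omega

lemma shiftIdx_zero {m : ℕ} (i : Fin m) : shiftIdx 0 i = i := by
  apply Fin.ext
  have h1 := shiftIdx_val 0 i
  have h2 : ((i : ℤ) - 0) % m = (i : ℤ) := by
    rw [sub_zero]
    exact Int.emod_eq_of_lt (by positivity) (by exact_mod_cast i.isLt)
  omega

lemma tshift_zero {m n : ℕ} (M : Mosaic m n) : tshift 0 0 M = M := by
  funext i j; simp [tshift, shiftIdx_zero]

lemma tshift_add {m n : ℕ} (x x' y y' : ℤ) (M : Mosaic m n) :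
    tshift (x + x') (y + y') M = tshift x y (tshift x' y' M) := by
  funext i j
  simp [tshift, shiftIdx_add, add_comm]

lemma tshift_congr {m n : ℕ} {x x' y y' : ℤ} (h1 : x % m = x' % m) (h2 : y % n = y' % n)
    (M : Mosaic m n) : tshift x y M = tshift x' y' M := by
  funext i j
  simp [tshift, shiftIdx_congr h1, shiftIdx_congr h2]

/-- Cyclic successor of an index. -/
def nxt {m : ℕ} (i : Fin m) : Fin m := shiftIdx (-1) i

lemma nxt_val {m : ℕ} (i : Fin m) :
    (nxt i).val = if i.val + 1 < m then i.val + 1 else 0 := by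
  have h1 := shiftIdx_val (-1) i
  have hi := i.isLt
  split_ifs with h
  · have : ((i : ℤ) - (-1)) % m = (i : ℤ) + 1 := by
      rw [sub_neg_eq_add]
      exact Int.emod_eq_of_lt (by positivity) (by exact_mod_cast h)
    simp only [nxt]; omega
  · have hieq : (i : ℤ) + 1 = (m : ℤ) := by omega
    have : ((i : ℤ) - (-1)) % m = 0 := by
      rw [sub_neg_eq_add, hieq, Int.emod_self]
    simp only [nxt]; omega

/-- Cyclic suitable connectedness. -/
def CSC {m n : ℕ} (M : Mosaic m n) : Prop :=
  (∀ (i : Fin m) (j : Fin n), cpR (M i j) = cpL (M i (nxt j))) ∧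
  (∀ (i : Fin m) (j : Fin n), cpB (M i j) = cpT (M (nxt i) j))

lemma periodKnot_iff_csc {m n : ℕ} (M : Mosaic m n) : PeriodKnot M ↔ CSC M := by
  constructor
  · rintro ⟨⟨hsc1, hsc2⟩, ⟨hb1, hb2⟩⟩
    constructor
    · intro i j
      by_cases h : j.val + 1 < n
      · have := hsc1 i j h
        have hv : nxt j = ⟨j.val + 1, h⟩ := by
          apply Fin.ext; rw [nxt_val]; simp [h]
        rw [hv]; exact this
      · have hj : j.val = n - 1 := by have := j.isLt; omega
        have hv : (nxt j).val = 0 := by rw [nxt_val]; simp [h]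
        exact (hb1 i (nxt j) j hv hj).symm
    · intro i j
      by_cases h : i.val + 1 < m
      · have := hsc2 i h j
        have hv : nxt i = ⟨i.val + 1, h⟩ := by
          apply Fin.ext; rw [nxt_val]; simp [h]
        rw [hv]; exact this
      · have hi : i.val = m - 1 := by have := i.isLt; omega
        have hv : (nxt i).val = 0 := by rw [nxt_val]; simp [h]
        exact (hb2 (nxt i) i j hv hi).symm
  · rintro ⟨h1, h2⟩
    refine ⟨⟨?_, ?_⟩, ?_, ?_⟩
    · intro i j h
      have := h1 i j
      have hv : nxt j = ⟨j.val + 1, h⟩ := by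
        apply Fin.ext; rw [nxt_val]; simp [h]
      rw [hv] at this; exact this
    · intro i h j
      have := h2 i j
      have hv : nxt i = ⟨i.val + 1, h⟩ := by
        apply Fin.ext; rw [nxt_val]; simp [h]
      rw [hv] at this; exact this
    · intro i j j' hj hj'
      have := h1 i j'
      have hv : nxt j' = j := by
        apply Fin.ext; rw [nxt_val]
        have := j'.isLt
        have h' : ¬ (j'.val + 1 < n) := by omega
        simp [h', hj]
      rw [hv] at this; exact this.symm
    · intro i i' j hi hi'
      have := h2 i' j
      have hv : nxt i' = i := by
        apply Fin.ext; rw [nxt_val]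
        have := i'.isLt
        have h' : ¬ (i'.val + 1 < m) := by omega
        simp [h', hi]
      rw [hv] at this; exact this.symm

lemma shiftIdx_nxt {m : ℕ} (x : ℤ) (i : Fin m) :
    shiftIdx x (nxt i) = nxt (shiftIdx x i) := by
  simp only [nxt, shiftIdx_add, add_comm]

lemma csc_tshift {m n : ℕ} (x y : ℤ) {M : Mosaic m n} (h : CSC M) : CSC (tshift x y M) := by
  obtain ⟨h1, h2⟩ := h
  constructor
  · intro i j; simp only [tshift, shiftIdx_nxt]; exact h1 _ _
  · intro i j; simp only [tshift, shiftIdx_nxt]; exact h2 _ _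

lemma periodKnot_tshift {m n : ℕ} (x y : ℤ) {M : Mosaic m n} (h : PeriodKnot M) :
    PeriodKnot (tshift x y M) := by
  rw [periodKnot_iff_csc] at h ⊢
  exact csc_tshift x y h

/-- The shift by an element of `(ZMod p)²`. -/
def zshift {p : ℕ} [NeZero p] (g : ZMod p × ZMod p) (M : Mosaic p p) : Mosaic p p :=
  tshift (g.1.val : ℤ) (g.2.val : ℤ) M

lemma tshift_eq_zshift {p : ℕ} [NeZero p] (x y : ℤ) (M : Mosaic p p) :
    tshift x y M = zshift ((x : ZMod p), (y : ZMod p)) M := by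
  apply tshift_congr
  · rw [ZMod.val_intCast, Int.emod_emod_of_dvd _ dvd_rfl]
  · rw [ZMod.val_intCast, Int.emod_emod_of_dvd _ dvd_rfl]

lemma zshift_zero {p : ℕ} [NeZero p] (M : Mosaic p p) : zshift 0 M = M := by
  simp only [zshift, Prod.fst_zero, Prod.snd_zero, ZMod.val_zero, Nat.cast_zero]
  exact tshift_zero M

lemma zshift_add {p : ℕ} [NeZero p] (g h : ZMod p × ZMod p) (M : Mosaic p p) :
    zshift (g + h) M = zshift g (zshift h M) := by
  have key : ∀ a b : ZMod p, (((a + b).val : ℤ)) % p = ((a.val : ℤ) + (b.val : ℤ)) % p := by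
    intro a b
    rw [ZMod.val_add]
    push_cast
    rw [Int.emod_emod_of_dvd _ dvd_rfl]
  calc zshift (g + h) M = tshift ((g.1.val : ℤ) + h.1.val) ((g.2.val : ℤ) + h.2.val) M := by
        apply tshift_congr (key g.1 h.1) (key g.2 h.2)
    _ = zshift g (zshift h M) := tshift_add _ _ _ _ M

/-- The stabilizer of a mosaic inside `(ZMod p)²`. -/
def stab {p : ℕ} [NeZero p] (M : Mosaic p p) : AddSubgroup (ZMod p × ZMod p) where
  carrier := {g | zshift g M = M}
  zero_mem' := zshift_zero M
  add_mem' := by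
    intro a b ha hb
    simp only [Set.mem_setOf_eq] at *
    rw [zshift_add, hb, ha]
  neg_mem' := by
    intro a ha
    simp only [Set.mem_setOf_eq] at *
    conv_lhs => rw [← ha]
    rw [← zshift_add, neg_add_cancel, zshift_zero]

lemma mem_stab {p : ℕ} [NeZero p] {M : Mosaic p p} {g : ZMod p × ZMod p} :
    g ∈ stab M ↔ zshift g M = M := Iff.rfl

lemma val_natCast_self {p : ℕ} [NeZero p] (c : ZMod p) : ((c.val : ℕ) : ZMod p) = c :=
  ZMod.natCast_rightInverse c

lemma nsmul_pair {p : ℕ} (n : ℕ) (g : ZMod p × ZMod p) :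
    n • g = ((n : ZMod p) * g.1, (n : ZMod p) * g.2) := by
  cases g with
  | mk a b => simp [Prod.ext_iff, nsmul_eq_mul]

lemma mul_mem_stab {p : ℕ} [NeZero p] {M : Mosaic p p} (c : ZMod p) {g : ZMod p × ZMod p}
    (h : g ∈ stab M) : (c * g.1, c * g.2) ∈ stab M := by
  have h2 := (stab M).nsmul_mem h c.val
  rwa [nsmul_pair, val_natCast_self] at h2

lemma mem_stab_iff_tshift {p : ℕ} [NeZero p] {M : Mosaic p p} (x y : ℤ) :
    ((x : ZMod p), (y : ZMod p)) ∈ stab M ↔ M = tshift x y M := by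
  rw [mem_stab, zshift, eq_comm]
  constructor
  · intro h; rw [tshift_eq_zshift]; exact h
  · intro h; rw [tshift_eq_zshift] at h; exact h

section PrimeLand

variable {p : ℕ} [hPF : Fact p.Prime] {M : Mosaic p p}

lemma stab_of_snd_ne {g : ZMod p × ZMod p} (hy : g.2 ≠ 0) :
    g ∈ stab M ↔ (g.1 * g.2⁻¹, 1) ∈ stab M := by
  constructor
  · intro h
    have h2 := mul_mem_stab g.2⁻¹ h
    rwa [inv_mul_cancel₀ hy, mul_comm] at h2
  · intro h
    have h2 := mul_mem_stab g.2 h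
    have e1 : g.2 * (g.1 * g.2⁻¹) = g.1 := by field_simp
    rw [e1, mul_one] at h2
    exact h2

lemma stab_of_fst_ne {g : ZMod p × ZMod p} (hy : g.2 = 0) (hx : g.1 ≠ 0) :
    g ∈ stab M ↔ ((1 : ZMod p), (0 : ZMod p)) ∈ stab M := by
  have hg : g = (g.1, 0) := by rw [← hy]
  constructor
  · intro h
    have h2 := mul_mem_stab g.1⁻¹ h
    rwa [hy, mul_zero, inv_mul_cancel₀ hx] at h2
  · intro h
    have h2 := mul_mem_stab g.1 h
    rw [mul_one, mul_zero] at h2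
    rw [hg]; exact h2

lemma stab_all_of_C0 (h1 : ((1 : ZMod p), (0 : ZMod p)) ∈ stab M)
    (h2 : ((0 : ZMod p), (1 : ZMod p)) ∈ stab M) (g : ZMod p × ZMod p) : g ∈ stab M := by
  have a1 := mul_mem_stab g.1 h1
  have a2 := mul_mem_stab g.2 h2
  have := (stab M).add_mem a1 a2
  simpa using this

/-- The `(1,1)`-fixed condition. -/
lemma isFPeriod11_iff :
    IsFPeriod 1 1 M ↔ ((1 : ZMod p), (0 : ZMod p)) ∈ stab M ∧
      ((0 : ZMod p), (1 : ZMod p)) ∈ stab M := by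
  have e1 : (((1 : ℤ) : ZMod p), ((0 : ℤ) : ZMod p)) = ((1 : ZMod p), (0 : ZMod p)) := by
    norm_num
  have e2 : (((0 : ℤ) : ZMod p), ((1 : ℤ) : ZMod p)) = ((0 : ZMod p), (1 : ZMod p)) := by
    norm_num
  constructor
  · rintro ⟨h1, h2⟩
    constructor
    · rw [← e1, mem_stab_iff_tshift]; exact_mod_cast h1.1.2
    · rw [← e2, mem_stab_iff_tshift]; exact_mod_cast h2.1.2
  · rintro ⟨h1, h2⟩
    rw [← e1, mem_stab_iff_tshift] at h1
    rw [← e2, mem_stab_iff_tshift] at h2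
    exact ⟨⟨⟨one_pos, by exact_mod_cast h1⟩, fun b hb => hb.1⟩,
      ⟨⟨one_pos, by exact_mod_cast h2⟩, fun b hb => hb.1⟩⟩

lemma tshift_p_vert : M = tshift 0 (p : ℤ) M := by
  rw [← mem_stab_iff_tshift]
  simp only [Int.cast_zero, Int.cast_natCast, ZMod.natCast_self]
  exact (stab M).zero_mem

lemma tshift_p_horiz : M = tshift (p : ℤ) 0 M := by
  rw [← mem_stab_iff_tshift]
  simp only [Int.cast_zero, Int.cast_natCast, ZMod.natCast_self]
  exact (stab M).zero_mem

lemma isFPeriod1p_iff :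
    IsFPeriod 1 p M ↔ ((1 : ZMod p), (0 : ZMod p)) ∈ stab M ∧
      ¬ ((0 : ZMod p), (1 : ZMod p)) ∈ stab M := by
  have hp2 : 2 ≤ p := hPF.out.two_le
  have e1 : (((1 : ℤ) : ZMod p), ((0 : ℤ) : ZMod p)) = ((1 : ZMod p), (0 : ZMod p)) := by
    norm_num
  have e2 : (((0 : ℤ) : ZMod p), ((1 : ℤ) : ZMod p)) = ((0 : ZMod p), (1 : ZMod p)) := by
    norm_num
  constructor
  · rintro ⟨h1, h2⟩
    refine ⟨by rw [← e1, mem_stab_iff_tshift]; exact_mod_cast h1.1.2, ?_⟩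
    intro hc
    rw [← e2, mem_stab_iff_tshift] at hc
    have : p ≤ 1 := h2.2 ⟨one_pos, by exact_mod_cast hc⟩
    omega
  · rintro ⟨h1, h2⟩
    rw [← e1, mem_stab_iff_tshift] at h1
    refine ⟨⟨⟨one_pos, by exact_mod_cast h1⟩, fun b hb => hb.1⟩,
      ⟨⟨by omega, ?_⟩, ?_⟩⟩
    · exact_mod_cast (tshift_p_vert (M := M))
    · rintro b ⟨hb0, hb⟩
      by_contra hlt
      push_neg at hlt
      have hmem : ((0 : ZMod p), ((b : ℕ) : ZMod p)) ∈ stab M := by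
        have := (mem_stab_iff_tshift (M := M) 0 (b : ℤ)).2 (by exact_mod_cast hb)
        simpa using this
      by_cases hbz : ((b : ℕ) : ZMod p) = 0
      · rw [ZMod.natCast_eq_zero_iff] at hbz
        have := Nat.le_of_dvd hb0 hbz
        omega
      · have := (stab_of_snd_ne (g := ((0 : ZMod p), ((b : ℕ) : ZMod p))) hbz).1 hmem
        simp only [zero_mul] at this
        exact h2 this

lemma isPk1_iff (k : ℕ) :
    IsPk1FPeriod k M ↔
      ¬ (((1 : ZMod p), (0 : ZMod p)) ∈ stab M ∧ ((0 : ZMod p), (1 : ZMod p)) ∈ stab M) ∧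
      (((k : ℕ) : ZMod p), (1 : ZMod p)) ∈ stab M := by
  unfold IsPk1FPeriod
  rw [isFPeriod11_iff]
  constructor
  · rintro ⟨h1, h2⟩
    refine ⟨h1, ?_⟩
    have := (mem_stab_iff_tshift (M := M) (k : ℤ) 1).2 h2
    simpa using this
  · rintro ⟨h1, h2⟩
    refine ⟨h1, ?_⟩
    have := (mem_stab_iff_tshift (M := M) (k : ℤ) 1).1 (by simpa using h2)
    exact this

end PrimeLand

section Counting

lemma card_congr_iff {α : Type*} {P Q : α → Prop} (h : ∀ x, P x ↔ Q x) :
    Nat.card {x // P x} = Nat.card {x // Q x} :=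
  Nat.card_congr (Equiv.subtypeEquivRight h)

lemma card_split {α : Type*} [Finite α] (P Q : α → Prop) :
    Nat.card {x : α // P x} = Nat.card {x // P x ∧ Q x} + Nat.card {x // P x ∧ ¬ Q x} := by
  classical
  have e : {x | P x} = {x | P x ∧ Q x} ∪ {x | P x ∧ ¬ Q x} := by
    ext x; by_cases h : Q x <;> simp [h]
  have hdisj : Disjoint {x | P x ∧ Q x} {x | P x ∧ ¬ Q x} := by
    rw [Set.disjoint_left]
    rintro x ⟨_, hq⟩ ⟨_, hnq⟩
    exact hnq hq
  calc Nat.card {x : α // P x} = ({x | P x} : Set α).ncard := Nat.card_coe_set_eq _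
    _ = ({x | P x ∧ Q x} ∪ {x | P x ∧ ¬ Q x} : Set α).ncard := by rw [e]
    _ = ({x | P x ∧ Q x} : Set α).ncard + ({x | P x ∧ ¬ Q x} : Set α).ncard :=
        Set.ncard_union_eq hdisj (Set.toFinite _) (Set.toFinite _)
    _ = Nat.card {x // P x ∧ Q x} + Nat.card {x // P x ∧ ¬ Q x} := rfl

lemma card_exists_split {α : Type*} [Finite α] (P : α → Prop) (Q : ℕ → α → Prop) (n : ℕ)
    (hdisj : ∀ x, P x → ∀ k, k < n → ∀ l, l < n → Q k x → Q l x → k = l) :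
    Nat.card {x : α // P x ∧ ∃ k, k < n ∧ Q k x} =
      ∑ k ∈ Finset.range n, Nat.card {x // P x ∧ Q k x} := by
  induction n with
  | zero =>
      simp only [Finset.range_zero, Finset.sum_empty]
      have : IsEmpty {x : α // P x ∧ ∃ k, k < 0 ∧ Q k x} := by
        constructor; rintro ⟨x, _, k, hk, _⟩; omega
      exact Nat.card_of_isEmpty
  | succ n ih =>
      rw [card_split (fun x => P x ∧ ∃ k, k < n + 1 ∧ Q k x) (Q n)]
      have e1 : Nat.card {x : α // (P x ∧ ∃ k, k < n + 1 ∧ Q k x) ∧ Q n x} =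
          Nat.card {x : α // P x ∧ Q n x} := by
        apply card_congr_iff
        intro x
        constructor
        · rintro ⟨⟨hP, _⟩, hQ⟩; exact ⟨hP, hQ⟩
        · rintro ⟨hP, hQ⟩; exact ⟨⟨hP, n, by omega, hQ⟩, hQ⟩
      have e2 : Nat.card {x : α // (P x ∧ ∃ k, k < n + 1 ∧ Q k x) ∧ ¬ Q n x} =
          Nat.card {x : α // P x ∧ ∃ k, k < n ∧ Q k x} := by
        apply card_congr_iff
        intro x
        constructor
        · rintro ⟨⟨hP, k, hk, hQ⟩, hn⟩
          refine ⟨hP, k, ?_, hQ⟩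
          rcases Nat.lt_succ_iff_lt_or_eq.1 hk with h | h
          · exact h
          · exact absurd (h ▸ hQ) hn
        · rintro ⟨hP, k, hk, hQ⟩
          refine ⟨⟨hP, k, by omega, hQ⟩, fun hn => ?_⟩
          have := hdisj x hP k (by omega) n (by omega) hQ hn
          omega
      rw [e1, e2, ih (fun x hx k hk l hl => hdisj x hx k (by omega) l (by omega)),
        Finset.sum_range_succ, add_comm]

end Counting

section SevenCount

variable {p : ℕ} [hPF : Fact p.Prime]

lemma p_pos : 0 < p := hPF.out.pos

lemma shiftIdx_self {m : ℕ} (i : Fin m) : shiftIdx ((i.val : ℕ) : ℤ) i = ⟨0, i.pos⟩ := by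
  apply Fin.ext
  have hv := shiftIdx_val ((i.val : ℕ) : ℤ) i
  simp only [sub_self, Int.zero_emod] at hv
  show (shiftIdx _ i).val = 0
  omega

lemma const_of_C0 {M : Mosaic p p}
    (h1 : ((1 : ZMod p), (0 : ZMod p)) ∈ stab M)
    (h2 : ((0 : ZMod p), (1 : ZMod p)) ∈ stab M) (i j : Fin p) :
    M i j = M ⟨0, p_pos⟩ ⟨0, p_pos⟩ := by
  have hall := stab_all_of_C0 h1 h2 ((i.val : ZMod p), (j.val : ZMod p))
  rw [mem_stab] at hall
  have e1 : shiftIdx (((i.val : ZMod p).val : ℤ)) i = (⟨0, p_pos⟩ : Fin p) := by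
    rw [ZMod.val_cast_of_lt i.isLt]
    exact shiftIdx_self i
  have e2 : shiftIdx (((j.val : ZMod p).val : ℤ)) j = (⟨0, p_pos⟩ : Fin p) := by
    rw [ZMod.val_cast_of_lt j.isLt]
    exact shiftIdx_self j
  conv_lhs => rw [← hall]
  show M (shiftIdx _ i) (shiftIdx _ j) = _
  rw [e1, e2]

lemma tshift_const (x y : ℤ) (c : Fin 11) :
    tshift x y (fun (_ : Fin p) (_ : Fin p) => c) = fun _ _ => c := rfl

lemma const_mem_stab (c : Fin 11) (g : ZMod p × ZMod p) :
    g ∈ stab (fun (_ : Fin p) (_ : Fin p) => c) := by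
  rw [mem_stab]; rfl

lemma const_periodKnot {c : Fin 11} (hc : cpL c = cpR c ∧ cpT c = cpB c) :
    PeriodKnot (fun (_ : Fin p) (_ : Fin p) => c) := by
  rw [periodKnot_iff_csc]
  exact ⟨fun i j => hc.1.symm, fun i j => hc.2.symm⟩

lemma card_C0 :
    Nat.card {M : Mosaic p p // PeriodKnot M ∧
      ((1 : ZMod p), (0 : ZMod p)) ∈ stab M ∧ ((0 : ZMod p), (1 : ZMod p)) ∈ stab M} = 7 := by
  have key : Nat.card {M : Mosaic p p // PeriodKnot M ∧
      ((1 : ZMod p), (0 : ZMod p)) ∈ stab M ∧ ((0 : ZMod p), (1 : ZMod p)) ∈ stab M} =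
      Nat.card {c : Fin 11 // cpL c = cpR c ∧ cpT c = cpB c} := by
    apply Nat.card_congr
    refine ⟨fun ⟨M, hPK, h1, h2⟩ => ⟨M ⟨0, p_pos⟩ ⟨0, p_pos⟩, ?_, ?_⟩,
      fun ⟨c, hc⟩ => ⟨fun _ _ => c, const_periodKnot hc, const_mem_stab c _, const_mem_stab c _⟩,
      ?_, ?_⟩
    · obtain ⟨hcsc1, hcsc2⟩ := (periodKnot_iff_csc M).1 hPK
      have := hcsc1 ⟨0, p_pos⟩ ⟨0, p_pos⟩
      rw [const_of_C0 h1 h2 ⟨0, p_pos⟩ (nxt ⟨0, p_pos⟩)] at this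
      exact this.symm
    · obtain ⟨hcsc1, hcsc2⟩ := (periodKnot_iff_csc M).1 hPK
      have := hcsc2 ⟨0, p_pos⟩ ⟨0, p_pos⟩
      rw [const_of_C0 h1 h2 (nxt ⟨0, p_pos⟩) ⟨0, p_pos⟩] at this
      exact this.symm
    · rintro ⟨M, hPK, h1, h2⟩
      apply Subtype.ext
      funext i j
      exact (const_of_C0 h1 h2 i j).symm
    · rintro ⟨c, hc⟩
      rfl
  rw [key, Nat.card_eq_fintype_card]
  decide

end SevenCount

section MainCount

variable {p : ℕ} [hPF : Fact p.Prime]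

lemma horiz_mem {M : Mosaic p p} (h : ((1 : ZMod p), (0 : ZMod p)) ∈ stab M) (k : ZMod p) :
    (k, (0 : ZMod p)) ∈ stab M := by
  rcases eq_or_ne k 0 with hk | hk
  · rw [hk]; exact (stab M).zero_mem
  · exact (stab_of_fst_ne (g := (k, 0)) rfl hk).2 h

lemma vert_of {M : Mosaic p p} {k : ZMod p} (h1 : ((1 : ZMod p), (0 : ZMod p)) ∈ stab M)
    (hk : (k, (1 : ZMod p)) ∈ stab M) : ((0 : ZMod p), (1 : ZMod p)) ∈ stab M := by
  have h2 := (stab M).add_mem hk ((stab M).neg_mem (horiz_mem h1 k))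
  simpa using h2

/-- `C0`-predicate shorthand. -/
def C0 (M : Mosaic p p) : Prop :=
  ((1 : ZMod p), (0 : ZMod p)) ∈ stab M ∧ ((0 : ZMod p), (1 : ZMod p)) ∈ stab M

lemma not_horiz_of {M : Mosaic p p} {k : ZMod p} (h0 : ¬ C0 M)
    (hk : (k, (1 : ZMod p)) ∈ stab M) : ¬ ((1 : ZMod p), (0 : ZMod p)) ∈ stab M := by
  intro h1
  exact h0 ⟨h1, vert_of h1 hk⟩

lemma k_unique {M : Mosaic p p} {k l : ℕ} (hkp : k < p) (hlp : l < p) (h0 : ¬ C0 M)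
    (hk : (((k : ℕ) : ZMod p), (1 : ZMod p)) ∈ stab M)
    (hl : (((l : ℕ) : ZMod p), (1 : ZMod p)) ∈ stab M) : k = l := by
  have hsub := (stab M).add_mem hk ((stab M).neg_mem hl)
  have hsub' : (((k : ℕ) : ZMod p) - ((l : ℕ) : ZMod p), (0 : ZMod p)) ∈ stab M := by
    simpa [sub_eq_add_neg] using hsub
  by_cases hne : ((k : ℕ) : ZMod p) = ((l : ℕ) : ZMod p)
  · have := congrArg ZMod.val hne
    rwa [ZMod.val_cast_of_lt hkp, ZMod.val_cast_of_lt hlp] at this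
  · exfalso
    have h1 := (stab_of_fst_ne (g := (((k : ℕ) : ZMod p) - ((l : ℕ) : ZMod p), 0)) rfl
      (sub_ne_zero.2 hne)).1 hsub'
    exact not_horiz_of h0 hk h1

/-- Abbreviated counts. -/
noncomputable def NtotC (p : ℕ) [Fact p.Prime] : ℕ :=
  Nat.card {M : Mosaic p p // PeriodKnot M}
noncomputable def AC (p : ℕ) [Fact p.Prime] : ℕ :=
  Nat.card {M : Mosaic p p // PeriodKnot M ∧ ((1 : ZMod p), (0 : ZMod p)) ∈ stab M}
noncomputable def BC (p : ℕ) [Fact p.Prime] (k : ZMod p) : ℕ :=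
  Nat.card {M : Mosaic p p // PeriodKnot M ∧ (k, (1 : ZMod p)) ∈ stab M}
noncomputable def dFP' (p : ℕ) [Fact p.Prime] : ℕ :=
  Nat.card {M : Mosaic p p // PeriodKnot M ∧
    ((1 : ZMod p), (0 : ZMod p)) ∈ stab M ∧ ¬ ((0 : ZMod p), (1 : ZMod p)) ∈ stab M}
noncomputable def dPk' (p : ℕ) [Fact p.Prime] (k : ℕ) : ℕ :=
  Nat.card {M : Mosaic p p // PeriodKnot M ∧ ¬ C0 M ∧
    (((k : ℕ) : ZMod p), (1 : ZMod p)) ∈ stab M}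
noncomputable def dPsq' (p : ℕ) [Fact p.Prime] : ℕ :=
  Nat.card {M : Mosaic p p // PeriodKnot M ∧ ¬ C0 M ∧
    ¬ ((1 : ZMod p), (0 : ZMod p)) ∈ stab M ∧
    ¬ (∃ k, k < p ∧ (((k : ℕ) : ZMod p), (1 : ZMod p)) ∈ stab M)}

lemma dFP_eq : dFP p p 1 p = dFP' p := by
  apply card_congr_iff
  intro M
  rw [and_congr_right_iff]
  intro _
  exact isFPeriod1p_iff

lemma dPk_eq (k : ℕ) : dPk p k = dPk' p k := by
  apply card_congr_iff
  intro M
  rw [and_congr_right_iff]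
  intro _
  rw [isPk1_iff]
  exact Iff.rfl

lemma dPsq_eq : dPsq p = dPsq' p := by
  apply card_congr_iff
  intro M
  have h11 := isFPeriod11_iff (M := M)
  have h1p := isFPeriod1p_iff (M := M)
  have hk1 := fun k : ℕ => isPk1_iff (M := M) k
  constructor
  · rintro ⟨hPK, h0, h1p', hks⟩
    refine ⟨hPK, fun hc => h0 (h11.2 hc), ?_, ?_⟩
    · intro hh
      by_cases hv : ((0 : ZMod p), (1 : ZMod p)) ∈ stab M
      · exact h0 (h11.2 ⟨hh, hv⟩)
      · exact h1p' (h1p.2 ⟨hh, hv⟩)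
    · rintro ⟨k, hkp, hksM⟩
      exact hks k hkp ((hk1 k).2 ⟨fun hc => h0 (h11.2 hc), hksM⟩)
  · rintro ⟨hPK, h0, hh, hEx⟩
    refine ⟨hPK, fun h => h0 (h11.1 h), fun h => hh (h1p.1 h).1, fun k hkp hc => ?_⟩
    exact hEx ⟨k, hkp, ((hk1 k).1 hc).2⟩

lemma AC_eq : AC p = dFP' p + 7 := by
  show Nat.card {M : Mosaic p p // PeriodKnot M ∧ ((1 : ZMod p), (0 : ZMod p)) ∈ stab M} = _
  rw [card_split (fun M : Mosaic p p =>
      PeriodKnot M ∧ ((1 : ZMod p), (0 : ZMod p)) ∈ stab M)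
      (fun M => ((0 : ZMod p), (1 : ZMod p)) ∈ stab M)]
  have e1 : Nat.card {M : Mosaic p p // (PeriodKnot M ∧ ((1 : ZMod p), (0 : ZMod p)) ∈ stab M) ∧
      ((0 : ZMod p), (1 : ZMod p)) ∈ stab M} = 7 := by
    rw [← card_C0 (p := p)]
    exact card_congr_iff fun M => by tauto
  have e2 : Nat.card {M : Mosaic p p // (PeriodKnot M ∧ ((1 : ZMod p), (0 : ZMod p)) ∈ stab M) ∧
      ¬ ((0 : ZMod p), (1 : ZMod p)) ∈ stab M} = dFP' p := by
    exact card_congr_iff fun M => by tauto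
  rw [e1, e2, add_comm]

lemma BC_eq (k : ℕ) : BC p ((k : ℕ) : ZMod p) = dPk' p k + 7 := by
  show Nat.card {M : Mosaic p p // PeriodKnot M ∧ (((k : ℕ) : ZMod p), (1 : ZMod p)) ∈ stab M} = _
  rw [card_split (fun M : Mosaic p p =>
      PeriodKnot M ∧ (((k : ℕ) : ZMod p), (1 : ZMod p)) ∈ stab M)
      (fun M => C0 M)]
  have e1 : Nat.card {M : Mosaic p p // (PeriodKnot M ∧
      (((k : ℕ) : ZMod p), (1 : ZMod p)) ∈ stab M) ∧ C0 M} = 7 := by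
    rw [← card_C0 (p := p)]
    apply card_congr_iff
    intro M
    constructor
    · rintro ⟨⟨hPK, _⟩, h0⟩; exact ⟨hPK, h0.1, h0.2⟩
    · rintro ⟨hPK, h1, h2⟩
      have hall := stab_all_of_C0 h1 h2 (((k : ℕ) : ZMod p), (1 : ZMod p))
      exact ⟨⟨hPK, hall⟩, ⟨h1, h2⟩⟩
  have e2 : Nat.card {M : Mosaic p p // (PeriodKnot M ∧
      (((k : ℕ) : ZMod p), (1 : ZMod p)) ∈ stab M) ∧ ¬ C0 M} = dPk' p k := by
    exact card_congr_iff fun M => by tauto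
  rw [e1, e2, add_comm]

lemma Ntot_partition :
    NtotC p = 7 + dFP' p + (∑ k ∈ Finset.range p, dPk' p k) + dPsq' p := by
  show Nat.card {M : Mosaic p p // PeriodKnot M} = _
  rw [card_split (fun M : Mosaic p p => PeriodKnot M) (fun M => C0 M)]
  have e1 : Nat.card {M : Mosaic p p // PeriodKnot M ∧ C0 M} = 7 := card_C0
  rw [e1]
  rw [card_split (fun M : Mosaic p p => PeriodKnot M ∧ ¬ C0 M)
      (fun M => ((1 : ZMod p), (0 : ZMod p)) ∈ stab M)]
  have e2 : Nat.card {M : Mosaic p p // (PeriodKnot M ∧ ¬ C0 M) ∧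
      ((1 : ZMod p), (0 : ZMod p)) ∈ stab M} = dFP' p := by
    apply card_congr_iff
    intro M
    constructor
    · rintro ⟨⟨hPK, h0⟩, h1⟩
      exact ⟨hPK, h1, fun hv => h0 ⟨h1, hv⟩⟩
    · rintro ⟨hPK, h1, hv⟩
      exact ⟨⟨hPK, fun h0 => hv h0.2⟩, h1⟩
  rw [e2]
  rw [card_split (fun M : Mosaic p p => (PeriodKnot M ∧ ¬ C0 M) ∧
      ¬ ((1 : ZMod p), (0 : ZMod p)) ∈ stab M)
      (fun M => ∃ k, k < p ∧ (((k : ℕ) : ZMod p), (1 : ZMod p)) ∈ stab M)]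
  have e3 : Nat.card {M : Mosaic p p // ((PeriodKnot M ∧ ¬ C0 M) ∧
      ¬ ((1 : ZMod p), (0 : ZMod p)) ∈ stab M) ∧
      ¬ (∃ k, k < p ∧ (((k : ℕ) : ZMod p), (1 : ZMod p)) ∈ stab M)} = dPsq' p := by
    exact card_congr_iff fun M => by tauto
  have e4 : Nat.card {M : Mosaic p p // ((PeriodKnot M ∧ ¬ C0 M) ∧
      ¬ ((1 : ZMod p), (0 : ZMod p)) ∈ stab M) ∧
      (∃ k, k < p ∧ (((k : ℕ) : ZMod p), (1 : ZMod p)) ∈ stab M)} =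
      ∑ k ∈ Finset.range p, dPk' p k := by
    have step := card_exists_split (fun M : Mosaic p p => PeriodKnot M ∧ ¬ C0 M)
      (fun k M => (((k : ℕ) : ZMod p), (1 : ZMod p)) ∈ stab M) p
      (fun M hM k hk l hl hQk hQl => k_unique hk hl hM.2 hQk hQl)
    have l1 : Nat.card {M : Mosaic p p // ((PeriodKnot M ∧ ¬ C0 M) ∧
        ¬ ((1 : ZMod p), (0 : ZMod p)) ∈ stab M) ∧
        (∃ k, k < p ∧ (((k : ℕ) : ZMod p), (1 : ZMod p)) ∈ stab M)} =
        Nat.card {M : Mosaic p p // (PeriodKnot M ∧ ¬ C0 M) ∧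
        (∃ k, k < p ∧ (((k : ℕ) : ZMod p), (1 : ZMod p)) ∈ stab M)} := by
      apply card_congr_iff
      intro M
      constructor
      · rintro ⟨⟨h1, _⟩, h2⟩; exact ⟨h1, h2⟩
      · rintro ⟨h1, k, hk, hks⟩
        exact ⟨⟨h1, not_horiz_of h1.2 hks⟩, k, hk, hks⟩
    rw [l1]
    refine step.trans (Finset.sum_congr rfl fun k _ => ?_)
    apply card_congr_iff
    intro M
    exact and_assoc
  rw [e3, e4]
  ring

end MainCount

section Burnside

variable (p : ℕ) [hPF : Fact p.Prime]

instance pkAction : AddAction (ZMod p × ZMod p) {M : Mosaic p p // PeriodKnot M} where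
  vadd g M := ⟨zshift g M.val, periodKnot_tshift _ _ M.prop⟩
  zero_vadd M := Subtype.ext (zshift_zero _)
  add_vadd g h M := Subtype.ext (zshift_add g h _)

lemma vadd_def (g : ZMod p × ZMod p) (M : {M : Mosaic p p // PeriodKnot M}) :
    (g +ᵥ M).val = zshift g M.val := rfl

lemma DT_eq_card_quotient :
    DT p p = Nat.card (Quotient (AddAction.orbitRel (ZMod p × ZMod p)
      {M : Mosaic p p // PeriodKnot M})) := by
  apply Nat.card_congr
  apply Quot.congrRight
  intro A B
  show torRel p p A B ↔ A ∈ AddAction.orbit (ZMod p × ZMod p) B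
  rw [AddAction.mem_orbit_iff]
  constructor
  · rintro ⟨x, y, h⟩
    refine ⟨-((x : ZMod p), (y : ZMod p)), ?_⟩
    apply Subtype.ext
    rw [vadd_def]
    have hB : B.val = zshift ((x : ZMod p), (y : ZMod p)) A.val := by
      rw [← h, tshift_eq_zshift]
    rw [hB, ← zshift_add, neg_add_cancel, zshift_zero]
  · rintro ⟨g, h⟩
    refine ⟨((-g).1.val : ℤ), ((-g).2.val : ℤ), ?_⟩
    have hBA : ((-g) +ᵥ A) = B := by
      rw [← h, ← add_vadd, neg_add_cancel, zero_vadd]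
    calc tshift ((-g).1.val : ℤ) ((-g).2.val : ℤ) A.val = ((-g) +ᵥ A).val := rfl
      _ = B.val := by rw [hBA]

lemma card_fixedBy_eq (g : ZMod p × ZMod p) :
    Nat.card (AddAction.fixedBy {M : Mosaic p p // PeriodKnot M} g) =
      Nat.card {M : Mosaic p p // PeriodKnot M ∧ g ∈ stab M} := by
  apply Nat.card_congr
  exact ⟨fun x => ⟨x.1.1, x.1.2, congrArg Subtype.val x.2⟩,
    fun y => ⟨⟨y.1, y.2.1⟩, Subtype.ext y.2.2⟩,
    fun x => rfl, fun y => rfl⟩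

lemma f_zero : Nat.card {M : Mosaic p p // PeriodKnot M ∧ (0 : ZMod p × ZMod p) ∈ stab M} =
    NtotC p := by
  apply card_congr_iff
  intro M
  exact ⟨fun h => h.1, fun h => ⟨h, (stab M).zero_mem⟩⟩

lemma f_horiz {x : ZMod p} (hx : x ≠ 0) :
    Nat.card {M : Mosaic p p // PeriodKnot M ∧ (x, (0 : ZMod p)) ∈ stab M} = AC p := by
  apply card_congr_iff
  intro M
  exact and_congr_right fun _ => stab_of_fst_ne (g := (x, 0)) rfl hx

lemma f_gen {x y : ZMod p} (hy : y ≠ 0) :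
    Nat.card {M : Mosaic p p // PeriodKnot M ∧ (x, y) ∈ stab M} = BC p (x * y⁻¹) := by
  apply card_congr_iff
  intro M
  exact and_congr_right fun _ => stab_of_snd_ne (g := (x, y)) hy

lemma cast_val_bijective : Function.Bijective (fun i : Fin p => ((i.val : ℕ) : ZMod p)) := by
  constructor
  · intro i j h
    have := congrArg ZMod.val h
    rw [ZMod.val_cast_of_lt i.isLt, ZMod.val_cast_of_lt j.isLt] at this
    exact Fin.ext this
  · intro k
    exact ⟨⟨k.val, k.val_lt⟩, val_natCast_self k⟩

lemma sum_BC_range :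
    ∑ k : ZMod p, BC p k = ∑ k ∈ Finset.range p, BC p ((k : ℕ) : ZMod p) := by
  rw [← Fin.sum_univ_eq_sum_range (fun k => BC p ((k : ℕ) : ZMod p)) p]
  exact (Fintype.sum_bijective _ (cast_val_bijective p)
    (fun i : Fin p => BC p ((i.val : ℕ) : ZMod p)) (BC p) (fun i => rfl)).symm

lemma burnside_count :
    DT p p * (p * p) = NtotC p + (p - 1) * AC p +
      (p - 1) * ∑ k ∈ Finset.range p, BC p ((k : ℕ) : ZMod p) := by
  classical
  set S := {M : Mosaic p p // PeriodKnot M} with hS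
  haveI : Fintype S := Fintype.ofFinite _
  haveI : ∀ g : ZMod p × ZMod p, Fintype (AddAction.fixedBy S g) := fun g => Fintype.ofFinite _
  haveI : Fintype (Quotient (AddAction.orbitRel (ZMod p × ZMod p) S)) := Fintype.ofFinite _
  have hb := AddAction.sum_card_fixedBy_eq_card_orbits_mul_card_addGroup (ZMod p × ZMod p) S
  have hcard : Fintype.card (ZMod p × ZMod p) = p * p := by
    rw [Fintype.card_prod, ZMod.card]
  have hDT : Fintype.card (Quotient (AddAction.orbitRel (ZMod p × ZMod p) S)) = DT p p := by
    rw [← Nat.card_eq_fintype_card, ← DT_eq_card_quotient]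
  rw [hcard, hDT] at hb
  rw [← hb]
  have hsum : ∀ g : ZMod p × ZMod p, Fintype.card (AddAction.fixedBy S g) =
      Nat.card {M : Mosaic p p // PeriodKnot M ∧ g ∈ stab M} := by
    intro g
    rw [← Nat.card_eq_fintype_card]
    exact card_fixedBy_eq p g
  calc ∑ g : ZMod p × ZMod p, Fintype.card (AddAction.fixedBy S g)
      = ∑ g : ZMod p × ZMod p, Nat.card {M : Mosaic p p // PeriodKnot M ∧ g ∈ stab M} := by
        exact Finset.sum_congr rfl fun g _ => hsum g
    _ = ∑ y : ZMod p, ∑ x : ZMod p,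
          Nat.card {M : Mosaic p p // PeriodKnot M ∧ (x, y) ∈ stab M} :=
        Fintype.sum_prod_type_right
          (f := fun g : ZMod p × ZMod p => Nat.card {M : Mosaic p p // PeriodKnot M ∧ g ∈ stab M})
    _ = NtotC p + (p - 1) * AC p + (p - 1) * ∑ k ∈ Finset.range p, BC p ((k : ℕ) : ZMod p) := by
        rw [← Finset.add_sum_erase _ _ (Finset.mem_univ (0 : ZMod p))]
        have inner0 : ∑ x : ZMod p,
            Nat.card {M : Mosaic p p // PeriodKnot M ∧ (x, (0 : ZMod p)) ∈ stab M} =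
            NtotC p + (p - 1) * AC p := by
          rw [← Finset.add_sum_erase _ _ (Finset.mem_univ (0 : ZMod p))]
          have h0 : Nat.card {M : Mosaic p p // PeriodKnot M ∧
              ((0 : ZMod p), (0 : ZMod p)) ∈ stab M} = NtotC p := by
            rw [← f_zero]
            apply card_congr_iff
            intro M
            rw [Prod.mk_zero_zero]
          rw [h0]
          have hrest : ∑ x ∈ Finset.univ.erase (0 : ZMod p),
              Nat.card {M : Mosaic p p // PeriodKnot M ∧ (x, (0 : ZMod p)) ∈ stab M} =
              (p - 1) * AC p := by
            rw [Finset.sum_congr rfl (fun x hx => f_horiz p (Finset.ne_of_mem_erase hx))]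
            rw [Finset.sum_const, Finset.card_erase_of_mem (Finset.mem_univ _),
              Finset.card_univ, ZMod.card, smul_eq_mul]
          rw [hrest]
        have innerNe : ∀ y ∈ Finset.univ.erase (0 : ZMod p),
            (∑ x : ZMod p, Nat.card {M : Mosaic p p // PeriodKnot M ∧ (x, y) ∈ stab M}) =
            ∑ k ∈ Finset.range p, BC p ((k : ℕ) : ZMod p) := by
          intro y hy
          have hy0 : y ≠ 0 := Finset.ne_of_mem_erase hy
          rw [Finset.sum_congr rfl (fun x _ => f_gen p hy0)]
          rw [← sum_BC_range p]
          exact Equiv.sum_comp (Equiv.mulRight₀ y⁻¹ (inv_ne_zero hy0)) (BC p)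
        rw [inner0, Finset.sum_congr rfl innerNe, Finset.sum_const,
          Finset.card_erase_of_mem (Finset.mem_univ _), Finset.card_univ, ZMod.card, smul_eq_mul]

lemma key_nat :
    DT p p * (p * p) = dPsq' p + p * (dFP' p + ∑ k ∈ Finset.range p, dPk' p k) + 7 * (p * p) := by
  have hp2 : 2 ≤ p := hPF.out.two_le
  obtain ⟨q, rfl⟩ : ∃ q, p = q + 1 := ⟨p - 1, by omega⟩
  rw [burnside_count, Ntot_partition, AC_eq]
  have hBC : ∑ k ∈ Finset.range (q + 1), BC (q + 1) ((k : ℕ) : ZMod (q + 1)) =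
      (∑ k ∈ Finset.range (q + 1), dPk' (q + 1) k) + 7 * (q + 1) := by
    rw [Finset.sum_congr rfl (fun k _ => BC_eq k), Finset.sum_add_distrib,
      Finset.sum_const, Finset.card_range, smul_eq_mul, mul_comm]
  rw [hBC]
  have hq : q + 1 - 1 = q := by omega
  rw [hq]
  ring

end Burnside

section Symmetry

/-- Tile relabelling for the vertical flip (swaps top and bottom connection points). -/
def sigmaT : Fin 11 → Fin 11 := ![0, 4, 3, 2, 1, 5, 6, 7, 8, 9, 10]

/-- Tile relabelling for the transpose (swaps left↔top and right↔bottom). -/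
def tauT : Fin 11 → Fin 11 := ![0, 3, 2, 1, 4, 6, 5, 7, 8, 9, 10]

lemma sigmaT_cp : ∀ t, cpL (sigmaT t) = cpL t ∧ cpR (sigmaT t) = cpR t ∧
    cpT (sigmaT t) = cpB t ∧ cpB (sigmaT t) = cpT t := by decide

lemma sigmaT_invol : ∀ t, sigmaT (sigmaT t) = t := by decide

lemma tauT_cp : ∀ t, cpL (tauT t) = cpT t ∧ cpR (tauT t) = cpB t ∧
    cpT (tauT t) = cpL t ∧ cpB (tauT t) = cpR t := by decide

lemma tauT_invol : ∀ t, tauT (tauT t) = t := by decide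

/-- Index reversal. -/
def rev {m : ℕ} (i : Fin m) : Fin m := ⟨m - 1 - i.val, by have := i.pos; omega⟩

lemma rev_rev {m : ℕ} (i : Fin m) : rev (rev i) = i := by
  apply Fin.ext
  have := i.isLt
  simp only [rev]
  omega

/-- Vertical flip of a mosaic. -/
def vflip {p : ℕ} (M : Mosaic p p) : Mosaic p p := fun i j => sigmaT (M (rev i) j)

/-- Transpose of a mosaic. -/
def transp {p : ℕ} (M : Mosaic p p) : Mosaic p p := fun i j => tauT (M j i)

lemma vflip_vflip {p : ℕ} (M : Mosaic p p) : vflip (vflip M) = M := by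
  funext i j
  simp only [vflip, sigmaT_invol, rev_rev]

lemma transp_transp {p : ℕ} (M : Mosaic p p) : transp (transp M) = M := by
  funext i j
  simp only [transp, tauT_invol]

lemma nxt_rev_nxt {m : ℕ} (i : Fin m) : nxt (rev (nxt i)) = rev i := by
  apply Fin.ext
  have h1 := nxt_val i
  have h2 := nxt_val (rev (nxt i))
  have hi := i.isLt
  have hr1 : (rev (nxt i)).val = m - 1 - (nxt i).val := rfl
  have hr2 : (rev i).val = m - 1 - i.val := rfl
  rw [hr1] at h2
  rw [hr2]
  split_ifs at h1 h2 <;> omega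

lemma periodKnot_vflip {p : ℕ} {M : Mosaic p p} (h : PeriodKnot M) : PeriodKnot (vflip M) := by
  rw [periodKnot_iff_csc] at h ⊢
  obtain ⟨h1, h2⟩ := h
  constructor
  · intro i j
    simp only [vflip, (sigmaT_cp _).1, (sigmaT_cp _).2.1]
    exact h1 _ _
  · intro i j
    simp only [vflip, (sigmaT_cp _).2.2.1, (sigmaT_cp _).2.2.2]
    have := h2 (rev (nxt i)) j
    rw [nxt_rev_nxt] at this
    exact this.symm

lemma periodKnot_transp {p : ℕ} {M : Mosaic p p} (h : PeriodKnot M) : PeriodKnot (transp M) := by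
  rw [periodKnot_iff_csc] at h ⊢
  obtain ⟨h1, h2⟩ := h
  constructor
  · intro i j
    simp only [transp, (tauT_cp _).2.1, (tauT_cp _).1]
    exact h2 _ _
  · intro i j
    simp only [transp, (tauT_cp _).2.2.2, (tauT_cp _).2.2.1]
    exact h1 _ _

lemma shiftIdx_rev {m : ℕ} (x : ℤ) (i : Fin m) :
    shiftIdx x (rev i) = rev (shiftIdx (-x) i) := by
  apply Fin.ext
  have hi := i.isLt
  have hm : (0 : ℤ) < (m : ℤ) := by exact_mod_cast i.pos
  have h1 := shiftIdx_val x (rev i)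
  have h2 := shiftIdx_val (-x) i
  have hrev : (((rev i).val : ℕ) : ℤ) = (m : ℤ) - 1 - i.val := by
    have : (rev i).val = m - 1 - i.val := rfl
    omega
  rw [hrev] at h1
  rw [sub_neg_eq_add] at h2
  have hb1 : 0 ≤ ((i : ℤ) + x) % m := Int.emod_nonneg _ (by omega)
  have hb2 : ((i : ℤ) + x) % m < m := Int.emod_lt_of_pos _ hm
  have key : ((m : ℤ) - 1 - i.val - x) % m = (m : ℤ) - 1 - ((i : ℤ) + x) % m := by
    have e1 : (m : ℤ) - 1 - i.val - x =
        ((m : ℤ) - 1 - ((i : ℤ) + x) % m) + m * (-(((i : ℤ) + x) / m)) := by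
      rw [Int.emod_def]; ring
    rw [e1, Int.add_mul_emod_self_left]
    exact Int.emod_eq_of_lt (by omega) (by omega)
  rw [key] at h1
  have hgoal : (rev (shiftIdx (-x) i)).val = m - 1 - (shiftIdx (-x) i).val := rfl
  omega

lemma neg_val_emod {p : ℕ} [NeZero p] (a : ZMod p) :
    (-((((-a).val : ℕ)) : ℤ)) % p = ((a.val : ℕ) : ℤ) % p := by
  have hz : (((((-a).val + a.val : ℕ)) : ZMod p)) = 0 := by
    push_cast
    rw [val_natCast_self, val_natCast_self]
    ring
  rw [ZMod.natCast_eq_zero_iff] at hz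
  obtain ⟨t, ht⟩ := hz
  have he : -((((-a).val : ℕ)) : ℤ) = ((a.val : ℕ) : ℤ) + (p : ℤ) * (-(t : ℤ)) := by
    have : ((-a).val : ℤ) + (a.val : ℤ) = (p : ℤ) * t := by exact_mod_cast congrArg Nat.cast ht
    rw [mul_neg]
    omega
  rw [he, Int.add_mul_emod_self_left]

lemma zshift_vflip {p : ℕ} [NeZero p] (g : ZMod p × ZMod p) (M : Mosaic p p) :
    zshift g (vflip M) = vflip (zshift (-g.1, g.2) M) := by
  funext i j
  show sigmaT (M (rev (shiftIdx (g.1.val : ℤ) i)) (shiftIdx (g.2.val : ℤ) j)) =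
    sigmaT (M (shiftIdx (((-g.1).val : ℕ) : ℤ) (rev i)) (shiftIdx (g.2.val : ℤ) j))
  have e : shiftIdx (((-g.1).val : ℕ) : ℤ) (rev i) = rev (shiftIdx ((g.1.val : ℕ) : ℤ) i) := by
    rw [shiftIdx_rev]
    congr 1
    exact shiftIdx_congr (neg_val_emod g.1) i
  rw [e]

lemma zshift_transp {p : ℕ} [NeZero p] (g : ZMod p × ZMod p) (M : Mosaic p p) :
    zshift g (transp M) = transp (zshift (g.2, g.1) M) := rfl

lemma vflip_inj {p : ℕ} {M N : Mosaic p p} (h : vflip M = vflip N) : M = N := by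
  have := congrArg vflip h
  rwa [vflip_vflip, vflip_vflip] at this

lemma transp_inj {p : ℕ} {M N : Mosaic p p} (h : transp M = transp N) : M = N := by
  have := congrArg transp h
  rwa [transp_transp, transp_transp] at this

lemma stab_vflip {p : ℕ} [NeZero p] {M : Mosaic p p} (g : ZMod p × ZMod p) :
    g ∈ stab (vflip M) ↔ (-g.1, g.2) ∈ stab M := by
  rw [mem_stab, mem_stab, zshift_vflip]
  constructor
  · intro h; exact vflip_inj h
  · intro h; rw [h]

lemma stab_transp {p : ℕ} [NeZero p] {M : Mosaic p p} (g : ZMod p × ZMod p) :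
    g ∈ stab (transp M) ↔ (g.2, g.1) ∈ stab M := by
  rw [mem_stab, mem_stab, zshift_transp]
  constructor
  · intro h; exact transp_inj h
  · intro h; rw [h]

variable {p : ℕ} [hPF : Fact p.Prime]

lemma C0_vflip {M : Mosaic p p} : C0 (vflip M) ↔ C0 M := by
  unfold C0
  rw [stab_vflip ((1 : ZMod p), (0 : ZMod p)), stab_vflip ((0 : ZMod p), (1 : ZMod p))]
  simp only [neg_zero]
  constructor
  · rintro ⟨h1, h2⟩
    refine ⟨?_, h2⟩
    have := (stab M).neg_mem h1
    simpa using this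
  · rintro ⟨h1, h2⟩
    refine ⟨?_, h2⟩
    have := (stab M).neg_mem h1
    simpa using this

lemma dFP'_eq_dPk'0 : dFP' p = dPk' p 0 := by
  have e1 : dPk' p 0 = Nat.card {M : Mosaic p p // PeriodKnot M ∧
      ((0 : ZMod p), (1 : ZMod p)) ∈ stab M ∧ ¬ ((1 : ZMod p), (0 : ZMod p)) ∈ stab M} := by
    apply card_congr_iff
    intro M
    simp only [Nat.cast_zero]
    constructor
    · rintro ⟨hPK, h0, hv⟩
      exact ⟨hPK, hv, fun hh => h0 ⟨hh, hv⟩⟩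
    · rintro ⟨hPK, hv, hh⟩
      exact ⟨hPK, fun h0 => hh h0.1, hv⟩
  rw [e1]
  apply Nat.card_congr
  refine ⟨fun x => ⟨transp x.1, ?_⟩, fun y => ⟨transp y.1, ?_⟩,
    fun x => Subtype.ext (transp_transp x.1), fun y => Subtype.ext (transp_transp y.1)⟩
  · obtain ⟨hPK, hh, hv⟩ := x.2
    refine ⟨periodKnot_transp hPK, ?_, ?_⟩
    · rw [stab_transp]; exact hh
    · rw [stab_transp]; exact hv
  · obtain ⟨hPK, hv, hh⟩ := y.2
    refine ⟨periodKnot_transp hPK, ?_, ?_⟩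
    · rw [stab_transp]; exact hv
    · rw [stab_transp]; exact hh

lemma dPk'_symm {k : ℕ} (hk : k ≤ p) : dPk' p k = dPk' p (p - k) := by
  have hcast : (((p - k : ℕ)) : ZMod p) = -((k : ℕ) : ZMod p) := by
    rw [Nat.cast_sub hk, ZMod.natCast_self]
    ring
  apply Nat.card_congr
  refine ⟨fun x => ⟨vflip x.1, ?_⟩, fun y => ⟨vflip y.1, ?_⟩,
    fun x => Subtype.ext (vflip_vflip x.1), fun y => Subtype.ext (vflip_vflip y.1)⟩
  · obtain ⟨hPK, h0, hs⟩ := x.2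
    refine ⟨periodKnot_vflip hPK, fun hc => h0 (C0_vflip.1 hc), ?_⟩
    rw [hcast, stab_vflip]
    simpa using hs
  · obtain ⟨hPK, h0, hs⟩ := y.2
    refine ⟨periodKnot_vflip hPK, fun hc => h0 (C0_vflip.1 hc), ?_⟩
    rw [stab_vflip, ← hcast]
    exact hs

lemma sum_symmetry (hp3 : 3 ≤ p) :
    dFP' p + ∑ k ∈ Finset.range p, dPk' p k =
      2 * ∑ k ∈ Finset.range ((p - 1) / 2 + 1), dPk' p k := by
  have hodd : Odd p := hPF.out.odd_of_ne_two (by omega)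
  obtain ⟨h, hh⟩ := hodd
  have hhalf : (p - 1) / 2 = h := by omega
  rw [hhalf, dFP'_eq_dPk'0]
  have hsplit : ∑ k ∈ Finset.range p, dPk' p k =
      (∑ k ∈ Finset.range (h + 1), dPk' p k) + ∑ k ∈ Finset.Ico (h + 1) p, dPk' p k := by
    simp only [Finset.range_eq_Ico]
    exact (Finset.sum_Ico_consecutive (fun k => dPk' p k)
      (show (0 : ℕ) ≤ h + 1 by omega) (show h + 1 ≤ p by omega)).symm
  have hrefl : ∑ k ∈ Finset.Ico (h + 1) p, dPk' p k = ∑ k ∈ Finset.Ico 1 (h + 1), dPk' p k := by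
    refine Finset.sum_nbij' (fun k => p - k) (fun k => p - k) ?_ ?_ ?_ ?_ ?_
    · intro a ha
      simp only [Finset.mem_Ico] at ha ⊢
      omega
    · intro a ha
      simp only [Finset.mem_Ico] at ha ⊢
      omega
    · intro a ha
      simp only [Finset.mem_Ico] at ha
      show p - (p - a) = a
      omega
    · intro a ha
      simp only [Finset.mem_Ico] at ha
      show p - (p - a) = a
      omega
    · intro a ha
      simp only [Finset.mem_Ico] at ha
      show dPk' p a = dPk' p (p - a)
      exact dPk'_symm (by omega)
  have hfirst : ∑ k ∈ Finset.range (h + 1), dPk' p k =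
      dPk' p 0 + ∑ k ∈ Finset.Ico 1 (h + 1), dPk' p k := by
    simp only [Finset.range_eq_Ico]
    rw [← Finset.sum_Ico_consecutive (fun k => dPk' p k)
      (show (0 : ℕ) ≤ 1 by omega) (show 1 ≤ h + 1 by omega)]
    rw [show Finset.Ico 0 1 = {0} from rfl, Finset.sum_singleton]
  rw [hsplit, hrefl, hfirst]
  ring

end Symmetry

end Aux

/-- For a prime `p ≥ 3`,
`D_T^{(p,p)} = (1/p²)·d_{p²} + (2/p)·Σ_{k=0}^{(p-1)/2} d_{p_{(k,1)}} + 7`. -/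
theorem toroidal_prime_square_enumeration (p : ℕ) (hP : p.Prime) (hp3 : 3 ≤ p) :
    (DT p p : ℚ) = (dPsq p : ℚ) / (p : ℚ) ^ 2 +
      (2 / (p : ℚ)) * ∑ k ∈ Finset.range ((p - 1) / 2 + 1), (dPk p k : ℚ) + 7 := by
  haveI : Fact p.Prime := ⟨hP⟩
  have hkey := key_nat p
  rw [sum_symmetry hp3] at hkey
  have hp0 : (p : ℚ) ≠ 0 := Nat.cast_ne_zero.2 (by omega)
  have hsum : ∑ k ∈ Finset.range ((p - 1) / 2 + 1), (dPk p k : ℚ) =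
      ((∑ k ∈ Finset.range ((p - 1) / 2 + 1), dPk' p k : ℕ) : ℚ) := by
    rw [Nat.cast_sum]
    exact Finset.sum_congr rfl fun k _ => by rw [dPk_eq]
  rw [hsum, dPsq_eq]
  have hcast : ((DT p p : ℚ)) * ((p : ℚ) * p) = (dPsq' p : ℚ) +
      (p : ℚ) * (2 * ((∑ k ∈ Finset.range ((p - 1) / 2 + 1), dPk' p k : ℕ) : ℚ)) +
      7 * ((p : ℚ) * p) := by
    exact_mod_cast congrArg (Nat.cast : ℕ → ℚ) hkey
  calc (DT p p : ℚ)
      = (↑(dPsq' p) + ↑p * (2 * ((∑ k ∈ Finset.range ((p - 1) / 2 + 1), dPk' p k : ℕ) : ℚ)) +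
          7 * ((p : ℚ) * p)) / ((p : ℚ) * p) := by
        rw [← hcast, mul_div_cancel_right₀ _ (mul_ne_zero hp0 hp0)]
    _ = (dPsq' p : ℚ) / (p : ℚ) ^ 2 +
        (2 / (p : ℚ)) * ((∑ k ∈ Finset.range ((p - 1) / 2 + 1), dPk' p k : ℕ) : ℚ) + 7 := by
        field_simp
end

section
/- For all positive integers m and n, the state matrix N^{(m,n)+} satisfies N^{(m,n)+} = (N^{(m,1)+})^n = (X_m^+ + O_m^+)^n. -/
-- ===== auxiliary development =====
section Aux

/-- Number of tiles with the given connection profile. -/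
def rowW (L R T B : Bool) : ℕ :=
  Fintype.card {k : Fin 11 // cpL k = L ∧ cpR k = R ∧ cpT k = T ∧ cpB k = B}

lemma rowW_eq : ∀ L R T B : Bool, rowW L R T B =
    if L = R then (if T = B then (if L then (if T then 4 else 1) else 1) else 0)
    else (if T = B then 0 else 1) := by decide

/-- Transfer-count: number of column mosaics with given side bits and top/bottom states. -/
def P : ℕ → ℕ → ℕ → Bool → Bool → ℕ
  | 0, _, _, s, t => if s = t then 1 else 0
  | m+1, a, b, s, t => ∑ u : Bool, P m a b s u * rowW (a.testBit m) (b.testBit m) u t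

lemma P_bits : ∀ (m a a' b b' : ℕ), (∀ k, k < m → a.testBit k = a'.testBit k) →
    (∀ k, k < m → b.testBit k = b'.testBit k) → ∀ s t, P m a b s t = P m a' b' s t := by
  intro m
  induction m with
  | zero => intro a a' b b' _ _ s t; rfl
  | succ m ih =>
    intro a a' b b' ha hb s t
    simp only [P]
    rw [ha m (by omega), hb m (by omega)]
    refine Finset.sum_congr rfl fun u _ => ?_
    rw [ih a a' b b' (fun k hk => ha k (by omega)) (fun k hk => hb k (by omega))]

lemma P_mod (m a b : ℕ) (s t : Bool) : P m (a % 2 ^ m) (b % 2 ^ m) s t = P m a b s t :=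
  P_bits m _ a _ b (fun k hk => by simp [Nat.testBit_mod_two_pow, hk])
    (fun k hk => by simp [Nat.testBit_mod_two_pow, hk]) s t

lemma matsPM_eq_P : ∀ (m a b : ℕ), matsPM m a b =
    (P m a b false false, P m a b true false, P m a b true true, P m a b false true) := by
  intro m
  induction m with
  | zero => intro a b; rfl
  | succ m ih =>
    intro a b
    have hbit : ∀ x : ℕ, x / 2 ^ m % 2 = (if x.testBit m then 1 else 0) := by
      intro x
      have := Nat.testBit_eq_decide_div_mod_eq (i := m) (x := x)
      rcases Nat.mod_two_eq_zero_or_one (x / 2 ^ m) with h | h <;> simp [h] at this ⊢ <;>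
        simp [this]
    simp only [matsPM, ih, P]
    rw [hbit a, hbit b]
    cases ha : a.testBit m <;> cases hb : b.testBit m <;>
      simp [Fintype.sum_bool, rowW_eq, P_mod, ha, hb, mul_comm]

end Aux
section Aux2

def encB : (m : ℕ) → (Fin m → Bool) → ℕ
  | 0, _ => 0
  | m+1, f => (f 0).toNat + 2 * encB m (fun i => f i.succ)

lemma encB_lt : ∀ (m : ℕ) (f : Fin m → Bool), encB m f < 2 ^ m := by
  intro m
  induction m with
  | zero => intro f; simp [encB]
  | succ m ih =>
    intro f
    have h1 := ih (fun i => f i.succ)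
    have h2 : (f 0).toNat ≤ 1 := Bool.toNat_le _
    have : (2 : ℕ) ^ (m + 1) = 2 * 2 ^ m := by ring
    simp only [encB]; omega

lemma testBit_encB : ∀ (m : ℕ) (f : Fin m → Bool) (k : ℕ),
    (encB m f).testBit k = if h : k < m then f ⟨k, h⟩ else false := by
  intro m
  induction m with
  | zero => intro f k; simp [encB]
  | succ m ih =>
    intro f k
    cases k with
    | zero =>
      simp only [encB, Nat.testBit_zero, Nat.add_mul_mod_self_left]
      cases hf : f 0 <;> simp [hf]
    | succ k =>
      have hdiv : ((f 0).toNat + 2 * encB m (fun i => f i.succ)) / 2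
          = encB m (fun i => f i.succ) := by
        have : (f 0).toNat ≤ 1 := Bool.toNat_le _
        omega
      rw [encB, Nat.testBit_add_one, hdiv, ih]
      by_cases h : k < m
      · simp [h, Nat.succ_lt_succ h]
      · simp [h, fun hh => h (Nat.lt_of_succ_lt_succ hh)]

/-- Encoding of a boundary state as an index. -/
def encSt {m : ℕ} (f : Fin m → Bool) : Fin (2 ^ m) := ⟨encB m f, encB_lt m f⟩

lemma stateOf_encSt {m : ℕ} (f : Fin m → Bool) : stateOf (encSt f) = f := by
  funext r
  simp [stateOf, encSt, testBit_encB, r.isLt]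

lemma stateOf_injective {m : ℕ} : Function.Injective (stateOf (m := m)) := by
  intro a b h
  refine Fin.ext (Nat.eq_of_testBit_eq fun k => ?_)
  by_cases hk : k < m
  · exact congrFun h ⟨k, hk⟩
  · rw [Nat.testBit_lt_two_pow, Nat.testBit_lt_two_pow]
    · exact lt_of_lt_of_le b.isLt (Nat.pow_le_pow_right (by norm_num) (by omega))
    · exact lt_of_lt_of_le a.isLt (Nat.pow_le_pow_right (by norm_num) (by omega))

lemma encSt_stateOf {m : ℕ} (c : Fin (2 ^ m)) : encSt (stateOf c) = c :=
  stateOf_injective (stateOf_encSt _)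

lemma card_fiber_sum {α : Type*} {β : Type*} [Finite α] [Fintype β] (f : α → β) :
    Nat.card α = ∑ b : β, Nat.card {a : α // f a = b} := by
  classical
  cases nonempty_fintype α
  rw [← Nat.card_congr (Equiv.sigmaFiberEquiv f)]
  simp [Nat.card_eq_fintype_card, Fintype.card_sigma]

end Aux2
section Aux3

/-- Condition for a single column of height `m+1`. -/
def ColCond (m : ℕ) (a b : ℕ) (s t : Bool) (N : Fin (m + 1) → Fin 11) : Prop :=
  (∀ (i : Fin (m + 1)) (h : i.val + 1 < m + 1), cpB (N i) = cpT (N ⟨i.val + 1, h⟩)) ∧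
  (∀ i : Fin (m + 1), cpL (N i) = a.testBit i.val ∧ cpR (N i) = b.testBit i.val) ∧
  cpT (N 0) = s ∧ cpB (N (Fin.last m)) = t

lemma card_tile (L R T B : Bool) :
    Nat.card {k : Fin 11 // cpL k = L ∧ cpR k = R ∧ cpT k = T ∧ cpB k = B} = rowW L R T B := by
  rw [rowW, Nat.card_eq_fintype_card]

lemma snoc_mk_lt {n : ℕ} {α : Type*} (p : Fin n → α) (x : α) (j : ℕ) (h : j < n + 1)
    (hj : j < n) : (Fin.snoc p x : Fin (n + 1) → α) ⟨j, h⟩ = p ⟨j, hj⟩ := by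
  rw [show (⟨j, h⟩ : Fin (n + 1)) = Fin.castSucc ⟨j, hj⟩ from rfl, Fin.snoc_castSucc]

lemma snoc_mk_last {n : ℕ} {α : Type*} (p : Fin n → α) (x : α) (h : n < n + 1) :
    (Fin.snoc p x : Fin (n + 1) → α) ⟨n, h⟩ = x := by
  rw [show (⟨n, h⟩ : Fin (n + 1)) = Fin.last n from rfl, Fin.snoc_last]

def stepEquiv (m a b : ℕ) (s t u : Bool) :
    {N : Fin (m + 2) → Fin 11 //
        ColCond (m + 1) a b s t N ∧ cpT (N (Fin.last (m + 1))) = u} ≃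
    {N : Fin (m + 1) → Fin 11 // ColCond m a b s u N} ×
    {k : Fin 11 // cpL k = a.testBit (m + 1) ∧ cpR k = b.testBit (m + 1) ∧
        cpT k = u ∧ cpB k = t} where
  toFun x :=
    (⟨Fin.init x.val, by
      obtain ⟨N, ⟨hvc, hlr, hT, hB⟩, hu⟩ := x
      refine ⟨?_, ?_, ?_, ?_⟩
      · intro i h
        simp only [Fin.init]
        exact hvc i.castSucc (by simp only [Fin.coe_castSucc]; omega)
      · intro i
        exact hlr i.castSucc
      · show cpT (N (Fin.castSucc 0)) = s
        rw [Fin.castSucc_zero]; exact hT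
      · show cpB (N (Fin.castSucc (Fin.last m))) = u
        have h1 := hvc ((Fin.last m).castSucc)
          (by simp only [Fin.coe_castSucc, Fin.val_last]; omega)
        rw [h1]; exact hu⟩,
     ⟨x.val (Fin.last (m + 1)), by
      obtain ⟨N, ⟨hvc, hlr, hT, hB⟩, hu⟩ := x
      exact ⟨(hlr _).1, (hlr _).2, hu, hB⟩⟩)
  invFun y :=
    ⟨Fin.snoc y.1.val y.2.val, by
      obtain ⟨⟨N', hvc', hlr', hT', hB'⟩, ⟨k, hk1, hk2, hk3, hk4⟩⟩ := y
      refine ⟨⟨?_, ?_, ?_, ?_⟩, ?_⟩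
      · intro i h
        obtain ⟨iv, hiv⟩ := i
        simp only at h
        by_cases hc : iv + 1 < m + 1
        · rw [snoc_mk_lt N' k iv hiv (by omega), snoc_mk_lt N' k (iv + 1) h hc]
          exact hvc' ⟨iv, by omega⟩ hc
        · have hm : iv = m := by omega
          subst hm
          rw [snoc_mk_lt N' k iv hiv (by omega), snoc_mk_last N' k h, hk3]
          exact hB'
      · intro i
        obtain ⟨iv, hiv⟩ := i
        by_cases hi : iv < m + 1
        · rw [snoc_mk_lt N' k iv hiv hi]
          exact hlr' ⟨iv, hi⟩
        · have hm : iv = m + 1 := by omega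
          subst hm
          rw [snoc_mk_last N' k hiv]
          exact ⟨hk1, hk2⟩
      · rw [show (0 : Fin (m + 2)) = Fin.castSucc 0 from (Fin.castSucc_zero).symm,
          Fin.snoc_castSucc]
        exact hT'
      · simp only [Fin.snoc_last]
        exact hk4
      · simp only [Fin.snoc_last]
        exact hk3⟩
  left_inv x := Subtype.ext (Fin.snoc_init_self x.val)
  right_inv y := by
    obtain ⟨⟨N', hN'⟩, ⟨k, hk⟩⟩ := y
    refine Prod.ext (Subtype.ext ?_) (Subtype.ext ?_) <;>
      simp [Fin.init_snoc, Fin.snoc_last]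

lemma colCard : ∀ (m a b : ℕ) (s t : Bool),
    Nat.card {N : Fin (m + 1) → Fin 11 // ColCond m a b s t N} = P (m + 1) a b s t := by
  intro m
  induction m with
  | zero =>
    intro a b s t
    have e : {N : Fin 1 → Fin 11 // ColCond 0 a b s t N} ≃
        {k : Fin 11 // cpL k = a.testBit 0 ∧ cpR k = b.testBit 0 ∧ cpT k = s ∧ cpB k = t} := by
      refine Equiv.subtypeEquiv (Equiv.funUnique (Fin 1) (Fin 11)) fun N => ?_
      constructor
      · rintro ⟨hvc, hlr, hT, hB⟩
        exact ⟨(hlr 0).1, (hlr 0).2, hT, hB⟩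
      · rintro ⟨h1, h2, h3, h4⟩
        refine ⟨fun i h => absurd h (by omega), fun i => ?_, h3, h4⟩
        rw [show i = 0 from Fin.ext (by omega)]
        exact ⟨h1, h2⟩
    rw [Nat.card_congr e, card_tile]
    show rowW _ _ s t = P 1 a b s t
    cases s <;> simp [P, Fintype.sum_bool]
  | succ m ih =>
    intro a b s t
    rw [card_fiber_sum (fun x : {N : Fin (m + 2) → Fin 11 // ColCond (m + 1) a b s t N} =>
      cpT (x.val (Fin.last (m + 1))))]
    show _ = P (m + 2) a b s t
    rw [show P (m + 2) a b s t =
      ∑ u : Bool, P (m + 1) a b s u * rowW (a.testBit (m + 1)) (b.testBit (m + 1)) u t from rfl]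
    refine Finset.sum_congr rfl fun u _ => ?_
    rw [Nat.card_congr ((Equiv.subtypeSubtypeEquivSubtypeInter _ _).trans (stepEquiv m a b s t u)),
      Nat.card_prod, ih, card_tile]

end Aux3
section Aux4

lemma Nplus_one (m : ℕ) (hm : 0 < m) :
    Nplus m 1 hm Nat.one_pos = Xplus m + Oplus m := by
  obtain ⟨m', rfl⟩ : ∃ m', m = m' + 1 := ⟨m - 1, by omega⟩
  ext a b
  have h0 : (⟨0, hm⟩ : Fin (m' + 1)) = 0 := Fin.ext (by simp)
  have hlast : (⟨m' + 1 - 1, Nat.sub_lt hm Nat.one_pos⟩ : Fin (m' + 1)) = Fin.last m' :=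
    Fin.ext (by simp)
  have E1 : {M : Mosaic (m' + 1) 1 // SuitablyConnected M ∧ tState hm M = bState hm M ∧
      lState Nat.one_pos M = stateOf a ∧ rState Nat.one_pos M = stateOf b} ≃
      {N : Fin (m' + 1) → Fin 11 //
        ((∀ (i : Fin (m' + 1)) (h : i.val + 1 < m' + 1), cpB (N i) = cpT (N ⟨i.val + 1, h⟩)) ∧
        (∀ i : Fin (m' + 1), cpL (N i) = (a : ℕ).testBit i.val ∧
          cpR (N i) = (b : ℕ).testBit i.val)) ∧
        cpT (N 0) = cpB (N (Fin.last m'))} :=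
    { toFun := fun M => ⟨fun i => M.val i 0, by
      obtain ⟨M, ⟨hH, hV⟩, htb, hl, hr⟩ := M
      refine ⟨⟨fun i h => hV i h 0, fun i => ⟨?_, ?_⟩⟩, ?_⟩
      · have := congrFun hl i
        simpa [lState, stateOf] using this
      · have := congrFun hr i
        simpa [rState, stateOf] using this
      · have := congrFun htb 0
        simp only [tState, bState] at this
        rw [h0, hlast] at this
        exact this⟩,
      invFun := fun N => ⟨fun i _ => N.val i, by
      obtain ⟨N, ⟨hvc, hlr⟩, htb⟩ := N
      refine ⟨⟨fun i j h => absurd h (by omega), fun i h j => hvc i h⟩, ?_, ?_, ?_⟩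
      · funext j
        simp only [tState, bState]
        rw [h0, hlast]
        exact htb
      · funext i
        simp only [lState, stateOf]
        exact (hlr i).1
      · funext i
        simp only [rState, stateOf]
        exact (hlr i).2⟩,
      left_inv := fun M => Subtype.ext (funext fun i => funext fun j => by
        show M.val i 0 = M.val i j
        rw [show j = (0 : Fin 1) from Fin.ext (by omega)]),
      right_inv := fun N => rfl }
  have key : Nplus (m' + 1) 1 hm Nat.one_pos a b
      = P (m' + 1) (a : ℕ) (b : ℕ) true true + P (m' + 1) (a : ℕ) (b : ℕ) false false := by
    show Nat.card _ = _
    rw [Nat.card_congr E1,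
      card_fiber_sum (fun x : {N : Fin (m' + 1) → Fin 11 // _} => cpT (x.val 0)),
      Fintype.sum_bool]
    congr 1
    · refine (Nat.card_congr ((Equiv.subtypeSubtypeEquivSubtypeInter _
          (fun N => cpT (N 0) = true)).trans
        (Equiv.subtypeEquivRight (fun N => ?_)))).trans (colCard m' (a : ℕ) (b : ℕ) true true)
      constructor
      · rintro ⟨⟨⟨h1, h2⟩, h3⟩, h4⟩
        exact ⟨h1, h2, h4, by rw [← h3, h4]⟩
      · rintro ⟨h1, h2, h3, h4⟩
        exact ⟨⟨⟨h1, h2⟩, h3.trans h4.symm⟩, h3⟩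
    · refine (Nat.card_congr ((Equiv.subtypeSubtypeEquivSubtypeInter _
          (fun N => cpT (N 0) = false)).trans
        (Equiv.subtypeEquivRight (fun N => ?_)))).trans (colCard m' (a : ℕ) (b : ℕ) false false)
      constructor
      · rintro ⟨⟨⟨h1, h2⟩, h3⟩, h4⟩
        exact ⟨h1, h2, h4, by rw [← h3, h4]⟩
      · rintro ⟨h1, h2, h3, h4⟩
        exact ⟨⟨⟨h1, h2⟩, h3.trans h4.symm⟩, h3⟩
  rw [Matrix.add_apply, key]
  simp only [Xplus, Oplus, Matrix.of_apply, matsPM_eq_P]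
  omega

end Aux4
section Aux5

lemma addCases_mk_lt {n1 n2 : ℕ} {α : Type*} (f : Fin n1 → α) (g : Fin n2 → α) (j : ℕ)
    (h : j < n1 + n2) (hj : j < n1) :
    (Fin.addCases (motive := fun _ => α) f g) ⟨j, h⟩ = f ⟨j, hj⟩ := by
  rw [show (⟨j, h⟩ : Fin (n1 + n2)) = Fin.castAdd n2 ⟨j, hj⟩ from rfl, Fin.addCases_left]

lemma addCases_mk_ge {n1 n2 : ℕ} {α : Type*} (f : Fin n1 → α) (g : Fin n2 → α) (j : ℕ)
    (h : j < n1 + n2) (hj : n1 ≤ j) (hj2 : j - n1 < n2) :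
    (Fin.addCases (motive := fun _ => α) f g) ⟨j, h⟩ = g ⟨j - n1, hj2⟩ := by
  rw [show (⟨j, h⟩ : Fin (n1 + n2)) = Fin.natAdd n1 ⟨j - n1, hj2⟩ from Fin.ext (by simp; omega),
    Fin.addCases_right]

variable {m n1 n2 : ℕ}

def glueEquiv (m n1 n2 : ℕ) (hm : 0 < m) (h1 : 0 < n1) (h2 : 0 < n2) (hsum : 0 < n1 + n2)
    (a b c : Fin (2 ^ m)) :
    {x : {M : Mosaic m (n1 + n2) // SuitablyConnected M ∧ tState hm M = bState hm M ∧
        lState hsum M = stateOf a ∧ rState hsum M = stateOf b} //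
      encSt (fun i => cpR (x.val i (Fin.castAdd n2 ⟨n1 - 1, Nat.sub_lt h1 Nat.one_pos⟩))) = c} ≃
    {M1 : Mosaic m n1 // SuitablyConnected M1 ∧ tState hm M1 = bState hm M1 ∧
        lState h1 M1 = stateOf a ∧ rState h1 M1 = stateOf c} ×
    {M2 : Mosaic m n2 // SuitablyConnected M2 ∧ tState hm M2 = bState hm M2 ∧
        lState h2 M2 = stateOf c ∧ rState h2 M2 = stateOf b} where
  toFun x :=
    (⟨fun i j => x.val.val i (Fin.castAdd n2 j), by
      obtain ⟨⟨M, ⟨hH, hV⟩, htb, hl, hr⟩, hmid⟩ := x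
      have hmidf : (fun i => cpR (M i (Fin.castAdd n2 ⟨n1 - 1, Nat.sub_lt h1 Nat.one_pos⟩)))
          = stateOf c := by rw [← hmid, stateOf_encSt]
      refine ⟨⟨fun i j h => ?_, fun i h j => hV i h (Fin.castAdd n2 j)⟩, ?_, ?_, ?_⟩
      · exact hH i (Fin.castAdd n2 j) (by simp only [Fin.coe_castAdd]; omega)
      · funext j; exact congrFun htb (Fin.castAdd n2 j)
      · funext i; exact congrFun hl i
      · exact hmidf⟩,
     ⟨fun i j => x.val.val i (Fin.natAdd n1 j), by
      obtain ⟨⟨M, ⟨hH, hV⟩, htb, hl, hr⟩, hmid⟩ := x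
      have hmidf : (fun i => cpR (M i (Fin.castAdd n2 ⟨n1 - 1, Nat.sub_lt h1 Nat.one_pos⟩)))
          = stateOf c := by rw [← hmid, stateOf_encSt]
      refine ⟨⟨fun i j h => ?_, fun i h j => hV i h (Fin.natAdd n1 j)⟩, ?_, ?_, ?_⟩
      · exact hH i (Fin.natAdd n1 j) (by simp only [Fin.coe_natAdd]; omega)
      · funext j; exact congrFun htb (Fin.natAdd n1 j)
      · funext i
        have hseam := hH i (Fin.castAdd n2 ⟨n1 - 1, Nat.sub_lt h1 Nat.one_pos⟩)
          (by simp only [Fin.coe_castAdd]; omega)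
        rw [show (⟨(Fin.castAdd n2 (⟨n1 - 1, Nat.sub_lt h1 Nat.one_pos⟩ : Fin n1)).val + 1,
            by simp only [Fin.coe_castAdd]; omega⟩ : Fin (n1 + n2))
          = Fin.natAdd n1 ⟨0, h2⟩ from Fin.ext (by simp; omega)] at hseam
        exact hseam.symm.trans (congrFun hmidf i)
      · funext i
        have hthis := congrFun hr i
        simp only [rState] at hthis
        rw [show (⟨n1 + n2 - 1, Nat.sub_lt hsum Nat.one_pos⟩ : Fin (n1 + n2))
          = Fin.natAdd n1 ⟨n2 - 1, Nat.sub_lt h2 Nat.one_pos⟩ from Fin.ext (by simp; omega)] at hthis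
        exact hthis⟩)
  invFun y :=
    ⟨⟨fun i j => Fin.addCases (motive := fun _ => Fin 11) (y.1.val i) (y.2.val i) j, by
      obtain ⟨⟨M1, ⟨hH1, hV1⟩, htb1, hl1, hr1⟩, ⟨M2, ⟨hH2, hV2⟩, htb2, hl2, hr2⟩⟩ := y
      refine ⟨⟨fun i j h => ?_, fun i h j => ?_⟩, ?_, ?_, ?_⟩
      · obtain ⟨jv, hjv⟩ := j
        simp only at h
        show cpR (Fin.addCases (motive := fun _ => Fin 11) (M1 i) (M2 i) ⟨jv, hjv⟩) =
          cpL (Fin.addCases (motive := fun _ => Fin 11) (M1 i) (M2 i) ⟨jv + 1, h⟩)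
        by_cases hc : jv + 1 < n1
        · rw [addCases_mk_lt (M1 i) (M2 i) jv hjv (by omega),
            addCases_mk_lt (M1 i) (M2 i) (jv + 1) h hc]
          exact hH1 i ⟨jv, by omega⟩ hc
        · by_cases hc2 : jv + 1 = n1
          · rw [addCases_mk_lt (M1 i) (M2 i) jv hjv (by omega),
              addCases_mk_ge (M1 i) (M2 i) (jv + 1) h (by omega) (by omega)]
            rw [show (⟨jv, by omega⟩ : Fin n1) = ⟨n1 - 1, Nat.sub_lt h1 Nat.one_pos⟩ from
              Fin.ext (by simp; omega)]
            rw [show (⟨jv + 1 - n1, by omega⟩ : Fin n2) = ⟨0, h2⟩ from Fin.ext (by simp; omega)]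
            exact (congrFun hr1 i).trans (congrFun hl2 i).symm
          · rw [addCases_mk_ge (M1 i) (M2 i) jv hjv (by omega) (by omega),
              addCases_mk_ge (M1 i) (M2 i) (jv + 1) h (by omega) (by omega)]
            have := hH2 i ⟨jv - n1, by omega⟩ (show (jv - n1) + 1 < n2 by omega)
            rw [show (⟨jv + 1 - n1, by omega⟩ : Fin n2) = ⟨(jv - n1) + 1,
              show (jv - n1) + 1 < n2 by omega⟩ from Fin.ext (by simp; omega)]
            exact this
      · refine Fin.addCases (motive := fun j =>
          cpB (Fin.addCases (motive := fun _ => Fin 11) (M1 i) (M2 i) j) =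
          cpT (Fin.addCases (motive := fun _ => Fin 11) (M1 ⟨i.val + 1, h⟩) (M2 ⟨i.val + 1, h⟩) j))
          (fun j' => ?_) (fun j' => ?_) j
        · simp only [Fin.addCases_left]; exact hV1 i h j'
        · simp only [Fin.addCases_right]; exact hV2 i h j'
      · funext j
        refine Fin.addCases (motive := fun j =>
          tState hm (fun i j => Fin.addCases (motive := fun _ => Fin 11) (M1 i) (M2 i) j) j =
          bState hm (fun i j => Fin.addCases (motive := fun _ => Fin 11) (M1 i) (M2 i) j) j)
          (fun j' => ?_) (fun j' => ?_) j
        · show cpT (Fin.addCases _ _ (Fin.castAdd n2 j')) = cpB (Fin.addCases _ _ (Fin.castAdd n2 j'))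
          simp only [Fin.addCases_left]; exact congrFun htb1 j'
        · show cpT (Fin.addCases _ _ (Fin.natAdd n1 j')) = cpB (Fin.addCases _ _ (Fin.natAdd n1 j'))
          simp only [Fin.addCases_right]; exact congrFun htb2 j'
      · funext i
        show cpL (Fin.addCases (motive := fun _ => Fin 11) (M1 i) (M2 i) ⟨0, hsum⟩) = stateOf a i
        rw [addCases_mk_lt (M1 i) (M2 i) 0 hsum h1]
        exact congrFun hl1 i
      · funext i
        show cpR (Fin.addCases (motive := fun _ => Fin 11) (M1 i) (M2 i)
          ⟨n1 + n2 - 1, Nat.sub_lt hsum Nat.one_pos⟩) = stateOf b i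
        rw [addCases_mk_ge (M1 i) (M2 i) (n1 + n2 - 1) (Nat.sub_lt hsum Nat.one_pos)
          (by omega) (by omega)]
        rw [show (⟨n1 + n2 - 1 - n1, by omega⟩ : Fin n2) = ⟨n2 - 1, Nat.sub_lt h2 Nat.one_pos⟩ from
          Fin.ext (by simp; omega)]
        exact congrFun hr2 i⟩, by
      obtain ⟨⟨M1, ⟨hH1, hV1⟩, htb1, hl1, hr1⟩, ⟨M2, ⟨hH2, hV2⟩, htb2, hl2, hr2⟩⟩ := y
      have : (fun i => cpR (Fin.addCases (motive := fun _ => Fin 11) (M1 i) (M2 i)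
          (Fin.castAdd n2 ⟨n1 - 1, Nat.sub_lt h1 Nat.one_pos⟩))) = stateOf c := by
        funext i
        rw [Fin.addCases_left]
        exact congrFun hr1 i
      rw [this, encSt_stateOf]⟩
  left_inv x := by
    refine Subtype.ext (Subtype.ext ?_)
    funext i j
    refine Fin.addCases (motive := fun j =>
      Fin.addCases (motive := fun _ => Fin 11)
        (fun j' => x.val.val i (Fin.castAdd n2 j')) (fun j' => x.val.val i (Fin.natAdd n1 j')) j
      = x.val.val i j) (fun j' => ?_) (fun j' => ?_) j
    · simp only [Fin.addCases_left]
    · simp only [Fin.addCases_right]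
  right_inv y := by
    refine Prod.ext (Subtype.ext ?_) (Subtype.ext ?_)
    · funext i j
      show Fin.addCases (motive := fun _ => Fin 11) (y.1.val i) (y.2.val i)
        (Fin.castAdd n2 j) = y.1.val i j
      rw [Fin.addCases_left]
    · funext i j
      show Fin.addCases (motive := fun _ => Fin 11) (y.1.val i) (y.2.val i)
        (Fin.natAdd n1 j) = y.2.val i j
      rw [Fin.addCases_right]

lemma Nplus_add (m n1 n2 : ℕ) (hm : 0 < m) (h1 : 0 < n1) (h2 : 0 < n2) (hsum : 0 < n1 + n2) :
    Nplus m (n1 + n2) hm hsum = Nplus m n1 hm h1 * Nplus m n2 hm h2 := by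
  ext a b
  rw [Matrix.mul_apply]
  show Nat.card {M : Mosaic m (n1 + n2) // SuitablyConnected M ∧ tState hm M = bState hm M ∧
      lState hsum M = stateOf a ∧ rState hsum M = stateOf b} = _
  rw [card_fiber_sum (fun x : {M : Mosaic m (n1 + n2) // SuitablyConnected M ∧
      tState hm M = bState hm M ∧ lState hsum M = stateOf a ∧ rState hsum M = stateOf b} =>
    encSt (fun i => cpR (x.val i (Fin.castAdd n2 ⟨n1 - 1, Nat.sub_lt h1 Nat.one_pos⟩))))]
  refine Finset.sum_congr rfl fun c _ => ?_
  exact (Nat.card_congr (glueEquiv m n1 n2 hm h1 h2 hsum a b c)).trans (Nat.card_prod _ _)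

end Aux5
/-- For all positive integers `m` and `n`,
`N^{(m,n)+} = (N^{(m,1)+})^n = (X_m^+ + O_m^+)^n`. -/
theorem state_matrix_power (m n : ℕ) (hm : 0 < m) (hn : 0 < n) :
    Nplus m n hm hn = (Nplus m 1 hm Nat.one_pos) ^ n ∧
    Nplus m n hm hn = (Xplus m + Oplus m) ^ n := by
  have hpow : ∀ k, ∀ hk : 0 < k, Nplus m k hm hk = (Nplus m 1 hm Nat.one_pos) ^ k := by
    intro k
    induction k with
    | zero => omega
    | succ k ih =>
      intro hk1
      by_cases hk : 0 < k
      · calc Nplus m (k + 1) hm hk1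
            = Nplus m k hm hk * Nplus m 1 hm Nat.one_pos :=
              Nplus_add m k 1 hm hk Nat.one_pos (by omega)
          _ = (Nplus m 1 hm Nat.one_pos) ^ k * Nplus m 1 hm Nat.one_pos := by rw [ih hk]
          _ = (Nplus m 1 hm Nat.one_pos) ^ (k + 1) := (pow_succ _ _).symm
      · have hk0 : k = 0 := by omega
        subst hk0
        rw [pow_one]
  refine ⟨hpow n hn, ?_⟩
  rw [hpow n hn, Nplus_one m hm]
end

section
/- For every positive integer m, the matrices X_m^+, X_m^-, O_m^+, O_m^- defined by the block recursion are exactly the state matrices of suitably connected (m,1)-mosaics: the (i,j)-entry of X_m^+ (resp. X_m^-, O_m^+, O_m^-) equals the number of suitably connected (m,1)-mosaics with i-th l-state, j-th r-state, and with (b-state, t-state) equal to (no connection point, no connection point) (resp. (no, yes), (yes, yes), (yes, no)). -/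
/-! The vertical edges of a single column form a chain, so the number of columns with given
side states and given top and bottom connection points obeys a transfer rule when one tile is
added at the bottom: only the left, right and bottom points of the new tile are prescribed, and
its top point becomes the new bottom condition for the shorter column. The block recursion
defining `X_m^±, O_m^±` is exactly this rule, because the most significant bit of a state
index describes the bottom row; the empty column (`top = bot`) gives the seeds `[1]` and `[0]`. -/

theorem Nat.card_subtype_fun_fin_succ {α : Type*} [Fintype α] {n : ℕ}
    (p : (Fin (n + 1) → α) → Prop) :
    Nat.card {f : Fin (n + 1) → α // p f} =
      ∑ a, Nat.card {f : Fin n → α // p (Fin.snoc f a)} := by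
  rw [← Nat.card_sigma]
  exact Nat.card_congr <| ((Fin.snocEquiv fun _ => α).symm.subtypeEquiv fun f => by simp).trans
    (Equiv.subtypeProdEquivSigmaSubtype fun a f => p (Fin.snoc f a))

theorem Fin.cons_eq_snoc_iff {α : Type*} {n : ℕ} {x y : α} {f g : Fin (n + 1) → α} :
    Fin.cons x f = Fin.snoc (α := fun _ => α) g y ↔
      x = g 0 ∧ (∀ i : Fin n, f i.castSucc = g i.succ) ∧ f (Fin.last n) = y := by
  rw [funext_iff, Fin.forall_fin_succ, Fin.forall_fin_succ']
  simp only [Fin.cons_zero, Fin.cons_succ]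
  simp only [Fin.succ_last, Fin.snoc_last, Fin.succ_castSucc, Fin.snoc_castSucc,
    ← Fin.castSucc_zero']

theorem Fin.forall_val_add_one_lt_iff {n : ℕ} {P : Fin (n + 1) → Fin (n + 1) → Prop} :
    (∀ (i : Fin (n + 1)) (h : i.val + 1 < n + 1), P i ⟨i.val + 1, h⟩) ↔
      ∀ i : Fin n, P i.castSucc i.succ :=
  ⟨fun hP i => hP i.castSucc (by simp), fun hP i h => hP ⟨i, by omega⟩⟩

theorem Nat.div_two_pow_mod_two_eq_zero_iff (x k : ℕ) :
    x / 2 ^ k % 2 = 0 ↔ x.testBit k = false := by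
  simp [Nat.testBit_eq_decide_div_mod_eq]

section Column

variable {n : ℕ}

/- The equation says that the sequence `top, cpB (c 0), …, cpB (c (n-1))` of points above each
tile and below the last one agrees with `cpT (c 0), …, cpT (c (n-1)), bot`; for `n = 0` it
reads `top = bot`. -/
def ColumnFits (A B : Fin n → Bool) (bot top : Bool) (c : Fin n → Fin 11) : Prop :=
  (∀ i, cpL (c i) = A i ∧ cpR (c i) = B i) ∧
    Fin.cons top (cpB ∘ c) = Fin.snoc (α := fun _ => Bool) (cpT ∘ c) bot

noncomputable def columnCount (A B : Fin n → Bool) (bot top : Bool) : ℕ :=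
  Nat.card {c // ColumnFits A B bot top c}

theorem columnFits_snoc {A B : Fin (n + 1) → Bool} {bot top : Bool} {c : Fin n → Fin 11}
    {t : Fin 11} :
    ColumnFits A B bot top (Fin.snoc c t) ↔
      (cpL t = A (Fin.last n) ∧ cpR t = B (Fin.last n) ∧ cpB t = bot) ∧
        ColumnFits (Fin.init A) (Fin.init B) (cpT t) top c := by
  simp only [ColumnFits, Fin.forall_fin_succ', Fin.snoc_castSucc, Fin.snoc_last, Fin.comp_snoc,
    Fin.cons_snoc_eq_snoc_cons, Fin.snoc_inj, Fin.init]
  tauto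

theorem columnCount_zero (A B : Fin 0 → Bool) (bot top : Bool) :
    columnCount A B bot top = if bot = top then 1 else 0 := by
  have fits_iff (c : Fin 0 → Fin 11) : ColumnFits A B bot top c ↔ bot = top := by
    simp [ColumnFits, funext_iff, Fin.forall_fin_one, Fin.snoc, eq_comm]
  rw [columnCount, Nat.card_congr (Equiv.subtypeEquivRight fits_iff)]
  split_ifs with h <;> simp [h]

/- With equal side points `x = y` the tiles are `T_0, T_6` (no side points) or `T_5` and the
four tiles `T_7, …, T_10` (both side points); otherwise they are the two corner tiles with the
given side point. -/
def tileTransfer (x y bot : Bool) (f : Bool → ℕ) : ℕ :=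
  if x = y then (if bot then (if x then 4 else 1) * f true else f false)
  else (if bot then f false else f true)

theorem sum_tiles_eq_tileTransfer (x y bot : Bool) (f : Bool → ℕ) :
    ∑ t : Fin 11, (if cpL t = x ∧ cpR t = y ∧ cpB t = bot then f (cpT t) else 0) =
      tileTransfer x y bot f := by
  cases x <;> cases y <;> cases bot <;>
    simp [Fin.sum_univ_succ, cpL, cpR, cpB, cpT, tileTransfer]
  ring

theorem columnCount_succ (A B : Fin (n + 1) → Bool) (bot top : Bool) :
    columnCount A B bot top = tileTransfer (A (Fin.last n)) (B (Fin.last n)) bot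
      (columnCount (Fin.init A) (Fin.init B) · top) := by
  rw [columnCount, Nat.card_subtype_fun_fin_succ, ← sum_tiles_eq_tileTransfer]
  refine Finset.sum_congr rfl fun t _ => ?_
  simp only [columnFits_snoc]
  split_ifs with h
  · simp only [h, true_and]; rfl
  · simp [h]

noncomputable def columnCounts (A B : Fin n → Bool) : ℕ × ℕ × ℕ × ℕ :=
  (columnCount A B false false, columnCount A B false true,
    columnCount A B true true, columnCount A B true false)

end Column

theorem matsPM_eq_columnCounts (n a b : ℕ) :
    matsPM n a b = columnCounts (fun i : Fin n => a.testBit i) (fun i => b.testBit i) := by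
  induction n generalizing a b with
  | zero => simp [matsPM, columnCounts, columnCount_zero]
  | succ k ih =>
    have init_bits (x : ℕ) : Fin.init (fun i : Fin (k + 1) => x.testBit i) =
        fun i : Fin k => (x % 2 ^ k).testBit i := by
      funext i
      simp [Fin.init, Nat.testBit_mod_two_pow]
    simp only [matsPM, ih, columnCounts, columnCount_succ, tileTransfer, init_bits, Fin.val_last,
      Nat.div_two_pow_mod_two_eq_zero_iff]
    obtain ha | ha := Bool.eq_false_or_eq_true (a.testBit k) <;>
      obtain hb | hb := Bool.eq_false_or_eq_true (b.testBit k) <;> simp [ha, hb]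

theorem suitablyConnected_column_iff {n : ℕ} (M : Mosaic (n + 1) 1) :
    SuitablyConnected M ↔ ∀ i : Fin n, cpB (M i.castSucc 0) = cpT (M i.succ 0) := by
  rw [SuitablyConnected,
    ← Fin.forall_val_add_one_lt_iff (P := fun i i' => cpB (M i 0) = cpT (M i' 0))]
  constructor
  · rintro ⟨-, h⟩ i hi
    exact h i hi 0
  · refine fun h => ⟨fun _ j hj => absurd hj (by omega), fun i hi j => ?_⟩
    rw [Subsingleton.elim j 0]
    exact h i hi

theorem columnFits_iff_mosaic {n : ℕ} (hm : 0 < n + 1) (M : Mosaic (n + 1) 1)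
    (A B : Fin (n + 1) → Bool) (bot top : Bool) :
    (SuitablyConnected M ∧ lState Nat.one_pos M = A ∧ rState Nat.one_pos M = B ∧
      bState hm M 0 = bot ∧ tState hm M 0 = top) ↔ ColumnFits A B bot top (fun i => M i 0) := by
  rw [ColumnFits, Fin.cons_eq_snoc_iff, suitablyConnected_column_iff]
  simp only [lState, rState, bState, tState, funext_iff, forall_and, Function.comp_apply]
  exact ⟨fun ⟨hsc, hl, hr, hb, ht⟩ => ⟨⟨hl, hr⟩, ht.symm, hsc, hb⟩,
    fun ⟨⟨hl, hr⟩, ht, hsc, hb⟩ => ⟨hsc, hl, hr, hb, ht.symm⟩⟩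

theorem card_column_mosaics_eq_columnCount (m : ℕ) (hm : 0 < m) (A B : Fin m → Bool)
    (bot top : Bool) :
    Nat.card {M : Mosaic m 1 // SuitablyConnected M ∧
      lState Nat.one_pos M = A ∧ rState Nat.one_pos M = B ∧
      bState hm M 0 = bot ∧ tState hm M 0 = top} = columnCount A B bot top := by
  obtain ⟨n, rfl⟩ := Nat.exists_eq_add_one_of_ne_zero hm.ne'
  exact Nat.card_congr <|
    (Equiv.arrowCongr (Equiv.refl _) (Equiv.funUnique (Fin 1) (Fin 11))).subtypeEquiv
      fun M => columnFits_iff_mosaic hm M A B bot top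

/-- For every positive integer `m`, the matrices `X_m^+, X_m^-, O_m^+, O_m^-`
are exactly the state matrices of suitably connected `(m,1)`-mosaics, split according to
their `(b-state, t-state)` being `(x,x)`, `(x,o)`, `(o,o)`, `(o,x)` respectively. -/
theorem column_state_matrices (m : ℕ) (hm : 0 < m) (a b : Fin (2 ^ m)) :
    Xplus m a b = Nat.card {M : Mosaic m 1 // SuitablyConnected M ∧
      lState Nat.one_pos M = stateOf a ∧ rState Nat.one_pos M = stateOf b ∧
      bState hm M 0 = false ∧ tState hm M 0 = false} ∧
    Xminus m a b = Nat.card {M : Mosaic m 1 // SuitablyConnected M ∧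
      lState Nat.one_pos M = stateOf a ∧ rState Nat.one_pos M = stateOf b ∧
      bState hm M 0 = false ∧ tState hm M 0 = true} ∧
    Oplus m a b = Nat.card {M : Mosaic m 1 // SuitablyConnected M ∧
      lState Nat.one_pos M = stateOf a ∧ rState Nat.one_pos M = stateOf b ∧
      bState hm M 0 = true ∧ tState hm M 0 = true} ∧
    Ominus m a b = Nat.card {M : Mosaic m 1 // SuitablyConnected M ∧
      lState Nat.one_pos M = stateOf a ∧ rState Nat.one_pos M = stateOf b ∧
      bState hm M 0 = true ∧ tState hm M 0 = false} := by
  simp only [card_column_mosaics_eq_columnCount, Xplus, Xminus, Oplus, Ominus, Matrix.of_apply,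
    matsPM_eq_columnCounts, columnCounts]
  exact ⟨rfl, rfl, rfl, rfl⟩
end
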